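/- arXiv:2207.10939 — 6 statements merged into one kernel-verified Lean document; each statement's English description precedes it below -/
import Mathlib

section
/- (Theorem 2: optimal error rate function of the log-likelihood-ratio test.) Let μ_0 and μ_1 be mutually absolutely continuous probability measures on a measurable space X, let l(x) = log(dμ_1/dμ_0)(x), and assume the LMGFs φ_k(t) = log E_{μ_k}[exp(t·l(x))] are finite for every t ∈ ℝ (k = 0, 1). Let x_1, ..., x_n be i.i.d. with common law μ_k under hypothesis H_k, let L^(n) = (1/n)·Σ_{i=1}^n l(x_i), and for a fixed threshold γ define α_n = P[L^(n) ≥ γ | H_0] and β_n = P[L^(n) < γ | H_1]. Then for every γ with −D(μ_0‖μ_1) < γ < D(μ_1‖μ_0): lim_{n→∞} (1/n)·log α_n = −I_0(γ) and lim_{n→∞} (1/n)·log β_n = −I_1(γ), where I_k is the Fenchel–Legendre transform of φ_k. -/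
/-!
Since `l` is the log-density of `μ₁` with respect to `μ₀`, tilting exchanges the two hypotheses:
`μ₀.tilted l = μ₁` and `μ₁.tilted (-l) = μ₀`. Both error probabilities are therefore upper-tail
probabilities of an i.i.d. sum `S_n` (of `l` under `H₀`, of `-l` under `H₁`) at a level `γ` strictly
between the mean and `Λ'(1)`, where `Λ` is the cumulant generating function of one summand, and
Cramér's theorem applies in this range. The Chernoff bound gives the upper estimate. For the lower
one pick `t ∈ [0, 1]` with `Λ'(t)` just above `γ`: under the measure tilted by `t S_n` the sum `S_n`
has cumulant generating function `n (Λ (t + ·) - Λ t)`, hence concentrates at `n Λ'(t)`, and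
undoing the tilt on `{n γ < S_n < n γ'}` costs at most a factor `exp (n (t γ' - Λ t))`.
-/

open MeasureTheory ProbabilityTheory Real Filter

open scoped ENNReal Topology

section ExponentialRate

lemma limsup_inv_mul_log_le {p : ℕ → ℝ≥0∞} {c : ℝ}
    (h : ∀ᶠ n : ℕ in atTop, p n ≤ ENNReal.ofReal (exp (n * c))) :
    limsup (fun n : ℕ => (((n : ℝ)⁻¹ : ℝ) : EReal) * ENNReal.log (p n)) atTop ≤ c := by
  refine limsup_le_of_le (by isBoundedDefault) ?_
  filter_upwards [h, eventually_gt_atTop 0] with n hpn hn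
  have hlog : ENNReal.log (p n) ≤ ((n * c : ℝ) : EReal) := by
    simpa [ENNReal.log_ofReal_of_pos (exp_pos _)] using ENNReal.log_monotone hpn
  calc (((n : ℝ)⁻¹ : ℝ) : EReal) * ENNReal.log (p n)
      ≤ (((n : ℝ)⁻¹ : ℝ) : EReal) * ((n * c : ℝ) : EReal) :=
        mul_le_mul_of_nonneg_left hlog (EReal.coe_nonneg.2 (by positivity))
    _ = c := by rw [← EReal.coe_mul]; field_simp

lemma le_liminf_inv_mul_log {p : ℕ → ℝ≥0∞} {C c : ℝ} (hC : 0 < C)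
    (h : ∀ᶠ n : ℕ in atTop, ENNReal.ofReal (C * exp (n * c)) ≤ p n) :
    (c : EReal) ≤ liminf (fun n : ℕ => (((n : ℝ)⁻¹ : ℝ) : EReal) * ENNReal.log (p n)) atTop := by
  have hlim : Tendsto (fun n : ℕ => ((c + (n : ℝ)⁻¹ * log C : ℝ) : EReal)) atTop (𝓝 c) := by
    refine (continuous_coe_real_ereal.tendsto c).comp ?_
    simpa using tendsto_const_nhds.add
      ((tendsto_inv_atTop_zero.comp tendsto_natCast_atTop_atTop).mul_const (log C))
  refine hlim.liminf_eq.symm.trans_le (liminf_le_liminf ?_)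
  filter_upwards [h, eventually_gt_atTop 0] with n hpn hn
  have hlog : ((log C + n * c : ℝ) : EReal) ≤ ENNReal.log (p n) := by
    simpa [ENNReal.log_ofReal_of_pos (by positivity : 0 < C * exp (n * c)), log_mul hC.ne'
      (exp_pos _).ne'] using ENNReal.log_monotone hpn
  calc ((c + (n : ℝ)⁻¹ * log C : ℝ) : EReal)
      = (((n : ℝ)⁻¹ : ℝ) : EReal) * ((log C + n * c : ℝ) : EReal) := by
        rw [← EReal.coe_mul]; congr 1; field_simp; ring
    _ ≤ _ := mul_le_mul_of_nonneg_left hlog (EReal.coe_nonneg.2 (by positivity))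

lemma tendsto_ofReal_exp_neg_mul {c : ℝ} (hc : 0 < c) :
    Tendsto (fun n : ℕ => ENNReal.ofReal (exp (-(n * c)))) atTop (𝓝 0) := by
  simpa [Function.comp_def] using (ENNReal.continuous_ofReal.tendsto 0).comp
    (tendsto_exp_neg_atTop_nhds_zero.comp (tendsto_natCast_atTop_atTop.atTop_mul_const hc))

end ExponentialRate

section Moments

variable {Ω : Type*} [MeasurableSpace Ω] {μ : Measure Ω} {X : Ω → ℝ} {t : ℝ}

lemma measure_ge_le_ofReal_exp_cgf [IsFiniteMeasure μ] (a : ℝ) (ht : 0 ≤ t)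
    (h_int : Integrable (fun ω => exp (t * X ω)) μ) :
    μ {ω | a ≤ X ω} ≤ ENNReal.ofReal (exp (-t * a + cgf X μ t)) :=
  (ENNReal.le_ofReal_iff_toReal_le (measure_ne_top _ _) (exp_pos _).le).2
    (measure_ge_le_exp_cgf a ht h_int)

lemma interior_integrableExpSet_eq_univ (h : ∀ t, Integrable (fun ω => exp (t * X ω)) μ) :
    interior (integrableExpSet X μ) = Set.univ := by
  rw [Set.eq_univ_of_forall (s := integrableExpSet X μ) h, interior_univ]

lemma differentiable_cgf (h : ∀ t, Integrable (fun ω => exp (t * X ω)) μ) :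
    Differentiable ℝ (cgf X μ) := fun t =>
  (analyticAt_cgf (by simp [interior_integrableExpSet_eq_univ h])).differentiableAt

lemma deriv_cgf_one (h : ∀ t, Integrable (fun ω => exp (t * X ω)) μ) :
    deriv (cgf X μ) 1 = ∫ ω, X ω ∂(μ.tilted X) := by
  rw [← integral_tilted_mul_self (by simp [interior_integrableExpSet_eq_univ h])]
  simp

lemma mul_integral_le_cgf [IsProbabilityMeasure μ] (hX : Integrable X μ)
    (ht : Integrable (fun ω => exp (t * X ω)) μ) : t * μ[X] ≤ cgf X μ t := by
  have hJensen := convexOn_exp.map_integral_le continuous_exp.continuousOn isClosed_univ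
    (ae_of_all _ fun _ => Set.mem_univ _) (hX.const_mul t) ht
  rw [integral_const_mul] at hJensen
  exact (le_log_iff_exp_le (mgf_pos ht)).2 hJensen

lemma integrable_exp_mul_tilted {s : ℝ} (ht : Integrable (fun ω => exp (t * X ω)) μ)
    (hts : Integrable (fun ω => exp ((t + s) * X ω)) μ) :
    Integrable (fun ω => exp (s * X ω)) (μ.tilted (t * X ·)) := by
  rw [integrable_tilted_iff ht]
  simpa [← exp_add, add_mul] using hts

lemma cgf_tilted_mul [NeZero μ] {s : ℝ} (ht : Integrable (fun ω => exp (t * X ω)) μ)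
    (hts : Integrable (fun ω => exp ((t + s) * X ω)) μ) :
    cgf X (μ.tilted (t * X ·)) s = cgf X μ (t + s) - cgf X μ t := by
  have hmgf : mgf X (μ.tilted (t * X ·)) s = mgf X μ (t + s) / mgf X μ t := by
    simp only [mgf, integral_exp_tilted, Pi.add_apply, add_mul]
  rw [cgf, hmgf, log_div (mgf_pos' (NeZero.ne μ) hts).ne' (mgf_pos' (NeZero.ne μ) ht).ne', cgf,
    cgf]

lemma ofReal_exp_cgf_sub_mul_mul_tilted_le [SFinite μ] (ht : 0 ≤ t)
    (h_int : Integrable (fun ω => exp (t * X ω)) μ) {s : Set Ω} {b : ℝ}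
    (hs : ∀ ω ∈ s, X ω ≤ b) :
    ENNReal.ofReal (exp (cgf X μ t - t * b)) * μ.tilted (t * X ·) s ≤ μ s := by
  rw [tilted_mul_apply_cgf s h_int, ← lintegral_const_mul' _ _ ENNReal.ofReal_ne_top,
    ← setLIntegral_one]
  refine setLIntegral_mono measurable_const fun ω hω => ?_
  rw [← ENNReal.ofReal_mul (exp_pos _).le, ← exp_add, ENNReal.ofReal_le_one, exp_le_one_iff]
  nlinarith [hs ω hω]

end Moments

section Concentration

variable {Ω : Type*} [MeasurableSpace Ω] {Q : ℕ → Measure Ω} {Z : ℕ → Ω → ℝ} {ψ : ℝ → ℝ}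
  {η a b : ℝ}

lemma exists_pos_measure_ge_le_exp_of_cgf_eq [∀ n, IsFiniteMeasure (Q n)]
    (hcgf : ∀ n s, cgf (Z n) (Q n) s = n * ψ s)
    (hint : ∀ n s, Integrable (fun ω => exp (s * Z n ω)) (Q n))
    (hψ0 : ψ 0 = 0) (hψ : HasDerivAt ψ η 0) (hb : η < b) :
    ∃ c > 0, ∀ n : ℕ, Q n {ω | n * b ≤ Z n ω} ≤ ENNReal.ofReal (exp (-(n * c))) := by
  obtain ⟨s, hslope, hs⟩ := ((hψ.hasDerivWithinAt.limsup_slope_le' Set.self_notMem_Ioi hb).and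
    self_mem_nhdsWithin).exists
  rw [slope_def_field, hψ0, sub_zero, sub_zero, div_lt_iff₀ hs] at hslope
  refine ⟨s * b - ψ s, by linarith, fun n => ?_⟩
  refine (measure_ge_le_ofReal_exp_cgf _ hs.le (hint n s)).trans_eq ?_
  rw [hcgf]
  ring_nf

lemma tendsto_measure_mem_Ioo_of_cgf_eq [∀ n, IsProbabilityMeasure (Q n)]
    (hcgf : ∀ n s, cgf (Z n) (Q n) s = n * ψ s)
    (hint : ∀ n s, Integrable (fun ω => exp (s * Z n ω)) (Q n))
    (hψ0 : ψ 0 = 0) (hψ : HasDerivAt ψ η 0) (ha : a < η) (hb : η < b) :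
    Tendsto (fun n : ℕ => Q n {ω | Z n ω ∈ Set.Ioo (n * a) (n * b)}) atTop (𝓝 1) := by
  obtain ⟨c₁, hc₁, hupper⟩ := exists_pos_measure_ge_le_exp_of_cgf_eq hcgf hint hψ0 hψ hb
  obtain ⟨c₂, hc₂, hlower⟩ := exists_pos_measure_ge_le_exp_of_cgf_eq (Z := fun n => -Z n)
    (ψ := fun s => ψ (-s)) (fun n s => by rw [cgf_neg, hcgf])
    (fun n s => by simpa using hint n (-s)) (by simpa using hψ0)
    (by simpa [Function.comp_def] using
      (show HasDerivAt ψ η (-0) by simpa using hψ).comp 0 (hasDerivAt_neg 0))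
    (neg_lt_neg ha)
  have hcompl : ∀ n : ℕ, Q n {ω | Z n ω ∈ Set.Ioo (n * a) (n * b)}ᶜ
      ≤ ENNReal.ofReal (exp (-(n * c₁))) + ENNReal.ofReal (exp (-(n * c₂))) := by
    intro n
    refine (measure_mono fun ω hω => ?_).trans
      ((measure_union_le _ _).trans (add_le_add (hupper n) (hlower n)))
    rcases le_or_gt (n * b) (Z n ω) with hZ | hZ
    · exact Or.inl hZ
    · refine Or.inr (show n * -a ≤ -Z n ω from ?_)
      have : ¬ n * a < Z n ω := fun h => hω ⟨h, hZ⟩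
      linarith
  refine tendsto_of_tendsto_of_tendsto_of_le_of_le (g := fun n : ℕ =>
      1 - (ENNReal.ofReal (exp (-(n * c₁))) + ENNReal.ofReal (exp (-(n * c₂)))))
    ?_ tendsto_const_nhds (fun n => ?_) (fun n => prob_le_one)
  · simpa using ENNReal.Tendsto.sub tendsto_const_nhds
      ((tendsto_ofReal_exp_neg_mul hc₁).add (tendsto_ofReal_exp_neg_mul hc₂))
      (Or.inl ENNReal.one_ne_top)
  · refine (tsub_le_tsub_left (hcompl n) 1).trans (tsub_le_iff_right.2 ?_)
    rw [← measure_univ (μ := Q n), ← Set.union_compl_self {ω | Z n ω ∈ Set.Ioo (n * a) (n * b)}]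
    exact measure_union_le _ _

end Concentration

noncomputable def rateFunction {Ω : Type*} [MeasurableSpace Ω] (X : Ω → ℝ) (μ : Measure Ω)
    (γ : ℝ) : EReal :=
  ⨆ t : ℝ, ((γ * t - cgf X μ t : ℝ) : EReal)

section RateFunction

variable {Ω : Type*} [MeasurableSpace Ω]

lemma rateFunction_neg (X : Ω → ℝ) (μ : Measure Ω) (γ : ℝ) :
    rateFunction (-X) μ (-γ) = rateFunction X μ γ :=
  (Equiv.neg ℝ).iSup_congr fun t => by simp [cgf_neg]

lemma neg_rateFunction_le (X : Ω → ℝ) (μ : Measure Ω) (γ t : ℝ) :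
    -rateFunction X μ γ ≤ ((cgf X μ t - t * γ : ℝ) : EReal) := by
  rw [EReal.neg_le, ← EReal.coe_neg, neg_sub, mul_comm]
  exact le_iSup (fun t => ((γ * t - cgf X μ t : ℝ) : EReal)) t

end RateFunction

section IID

variable {Ω Ω' : Type*} [MeasurableSpace Ω] [MeasurableSpace Ω'] {P : Measure Ω}
  {ν : Measure Ω'} {Y : ℕ → Ω → ℝ} {Z : Ω' → ℝ}

lemma mgf_sum_range_of_iid (hindep : iIndepFun Y P) (hident : ∀ i, IdentDistrib (Y i) Z P ν)
    (n : ℕ) (t : ℝ) :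
    mgf (fun ω => ∑ i ∈ Finset.range n, Y i ω) P t = mgf Z ν t ^ n := by
  rw [← Finset.sum_fn, hindep.mgf_sum₀ fun i => (hident i).aemeasurable_fst]
  simp [fun i => mgf_congr_of_identDistrib _ _ (hident i) t]

lemma integrable_exp_mul_sum_range_of_iid [IsProbabilityMeasure ν] (hindep : iIndepFun Y P)
    (hident : ∀ i, IdentDistrib (Y i) Z P ν) {t : ℝ}
    (hint : Integrable (fun ω => exp (t * Z ω)) ν) (n : ℕ) :
    Integrable (fun ω => exp (t * ∑ i ∈ Finset.range n, Y i ω)) P :=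
  Integrable.of_integral_ne_zero
    (((mgf_sum_range_of_iid hindep hident n t).trans_gt (pow_pos (mgf_pos hint) n)).ne')

lemma cgf_sum_range_of_iid (hindep : iIndepFun Y P) (hident : ∀ i, IdentDistrib (Y i) Z P ν)
    (n : ℕ) (t : ℝ) :
    cgf (fun ω => ∑ i ∈ Finset.range n, Y i ω) P t = n * cgf Z ν t := by
  rw [cgf, mgf_sum_range_of_iid hindep hident, log_pow, cgf]

end IID

section Cramer

variable {Ω Ω' : Type*} [MeasurableSpace Ω] [MeasurableSpace Ω'] {P : Measure Ω}
  {ν : Measure Ω'} {Y : ℕ → Ω → ℝ} {Z : Ω' → ℝ} {γ : ℝ}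

lemma limsup_inv_mul_log_measure_ge_le_cgf [IsProbabilityMeasure P] [IsProbabilityMeasure ν]
    (hindep : iIndepFun Y P) (hident : ∀ i, IdentDistrib (Y i) Z P ν) {t : ℝ} (ht : 0 ≤ t)
    (hint : Integrable (fun ω => exp (t * Z ω)) ν) :
    limsup (fun n : ℕ => (((n : ℝ)⁻¹ : ℝ) : EReal) *
      ENNReal.log (P {ω | γ ≤ (n : ℝ)⁻¹ * ∑ i ∈ Finset.range n, Y i ω})) atTop
      ≤ ((cgf Z ν t - t * γ : ℝ) : EReal) := by
  refine limsup_inv_mul_log_le ?_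
  filter_upwards [eventually_gt_atTop 0] with n hn
  simp_rw [le_inv_mul_iff₀ (Nat.cast_pos.2 hn : (0 : ℝ) < n)]
  refine (measure_ge_le_ofReal_exp_cgf _ ht
    (integrable_exp_mul_sum_range_of_iid hindep hident hint n)).trans_eq ?_
  rw [cgf_sum_range_of_iid hindep hident]
  ring_nf

lemma limsup_inv_mul_log_measure_ge_le [IsProbabilityMeasure P] [IsProbabilityMeasure ν]
    (hindep : iIndepFun Y P) (hident : ∀ i, IdentDistrib (Y i) Z P ν)
    (hint : ∀ t, Integrable (fun ω => exp (t * Z ω)) ν) (hmean : ν[Z] < γ) :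
    limsup (fun n : ℕ => (((n : ℝ)⁻¹ : ℝ) : EReal) *
      ENNReal.log (P {ω | γ ≤ (n : ℝ)⁻¹ * ∑ i ∈ Finset.range n, Y i ω})) atTop
      ≤ -rateFunction Z ν γ := by
  have hZ : Integrable Z ν :=
    integrable_of_mem_interior_integrableExpSet (by simp [interior_integrableExpSet_eq_univ hint])
  rw [rateFunction, EReal.le_neg]
  refine iSup_le fun t => ?_
  rw [EReal.le_neg, ← EReal.coe_neg, neg_sub, mul_comm γ t]
  rcases le_or_gt 0 t with ht | ht
  · exact limsup_inv_mul_log_measure_ge_le_cgf hindep hident ht (hint t)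
  · -- for `t < 0` the bound is beaten by the one at `t = 0`, since `cgf Z ν t ≥ t * ν[Z] > t * γ`
    refine (limsup_inv_mul_log_measure_ge_le_cgf hindep hident le_rfl (hint 0)).trans
      (EReal.coe_le_coe_iff.2 ?_)
    have := mul_integral_le_cgf hZ (hint t)
    rw [cgf_zero]
    nlinarith

lemma cgf_sub_mul_le_liminf_inv_mul_log_measure_gt [IsProbabilityMeasure P]
    [IsProbabilityMeasure ν] (hindep : iIndepFun Y P) (hident : ∀ i, IdentDistrib (Y i) Z P ν)
    (hint : ∀ t, Integrable (fun ω => exp (t * Z ω)) ν) {t γ' : ℝ} (ht : 0 ≤ t)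
    (hγ : γ < deriv (cgf Z ν) t) (hγ' : deriv (cgf Z ν) t < γ') :
    ((cgf Z ν t - t * γ' : ℝ) : EReal) ≤ liminf (fun n : ℕ => (((n : ℝ)⁻¹ : ℝ) : EReal) *
      ENNReal.log (P {ω | γ < (n : ℝ)⁻¹ * ∑ i ∈ Finset.range n, Y i ω})) atTop := by
  set S : ℕ → Ω → ℝ := fun n ω => ∑ i ∈ Finset.range n, Y i ω
  have hintS : ∀ n s, Integrable (fun ω => exp (s * S n ω)) P := fun n s =>
    integrable_exp_mul_sum_range_of_iid hindep hident (hint s) n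
  have : ∀ n, IsProbabilityMeasure (P.tilted (t * S n ·)) := fun n =>
    isProbabilityMeasure_tilted (hintS n t)
  have hconc : Tendsto (fun n : ℕ => P.tilted (t * S n ·) {ω | S n ω ∈ Set.Ioo (n * γ) (n * γ')})
      atTop (𝓝 1) := by
    refine tendsto_measure_mem_Ioo_of_cgf_eq (ψ := fun s => cgf Z ν (t + s) - cgf Z ν t)
      (fun n s => ?_) (fun n s => integrable_exp_mul_tilted (hintS n t) (hintS n (t + s)))
      (by simp) ?_ hγ hγ'
    · rw [cgf_tilted_mul (hintS n t) (hintS n (t + s)), cgf_sum_range_of_iid hindep hident,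
        cgf_sum_range_of_iid hindep hident]
      ring
    · simpa using ((differentiable_cgf hint (t + 0)).hasDerivAt.comp_const_add t 0).sub_const
        (cgf Z ν t)
  refine le_liminf_inv_mul_log (C := 2⁻¹) (by norm_num) ?_
  filter_upwards [hconc.eventually (eventually_ge_nhds (ENNReal.inv_lt_one.2 ENNReal.one_lt_two)),
    eventually_gt_atTop 0] with n hhalf hn
  calc ENNReal.ofReal (2⁻¹ * exp (n * (cgf Z ν t - t * γ')))
      = ENNReal.ofReal (exp (cgf (S n) P t - t * (n * γ'))) * 2⁻¹ := by
        rw [cgf_sum_range_of_iid hindep hident, mul_comm, ENNReal.ofReal_mul (exp_pos _).le,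
          ENNReal.ofReal_inv_of_pos two_pos, ENNReal.ofReal_ofNat]
        ring_nf
    _ ≤ ENNReal.ofReal (exp (cgf (S n) P t - t * (n * γ'))) *
        P.tilted (t * S n ·) {ω | S n ω ∈ Set.Ioo (n * γ) (n * γ')} := by gcongr
    _ ≤ P {ω | S n ω ∈ Set.Ioo (n * γ) (n * γ')} :=
        ofReal_exp_cgf_sub_mul_mul_tilted_le ht (hintS n t) fun ω hω => hω.2.le
    _ ≤ P {ω | γ < (n : ℝ)⁻¹ * S n ω} :=
        measure_mono fun ω hω => (lt_inv_mul_iff₀ (Nat.cast_pos.2 hn)).2 hω.1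

lemma neg_rateFunction_le_liminf_inv_mul_log_measure_gt [IsProbabilityMeasure P]
    [IsProbabilityMeasure ν] (hindep : iIndepFun Y P) (hident : ∀ i, IdentDistrib (Y i) Z P ν)
    (hint : ∀ t, Integrable (fun ω => exp (t * Z ω)) ν) (hmean : ν[Z] < γ) {t₁ : ℝ}
    (ht₁ : 0 ≤ t₁) (hγt₁ : γ < deriv (cgf Z ν) t₁) :
    -rateFunction Z ν γ ≤ liminf (fun n : ℕ => (((n : ℝ)⁻¹ : ℝ) : EReal) *
      ENNReal.log (P {ω | γ < (n : ℝ)⁻¹ * ∑ i ∈ Finset.range n, Y i ω})) atTop := by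
  refine EReal.ge_of_forall_gt_iff_ge.1 fun z hz => ?_
  obtain ⟨z', hzz', hz'⟩ := EReal.lt_iff_exists_real_btwn.1 hz
  rw [EReal.coe_lt_coe_iff] at hzz'
  set ε := (z' - z) / (t₁ + 1)
  have hε : 0 < ε := div_pos (by linarith) (by linarith)
  obtain ⟨η, hγη, hη⟩ := exists_between (lt_min (lt_add_of_pos_right γ hε) hγt₁)
  obtain ⟨t, ⟨ht, htt₁⟩, hderiv⟩ := exists_hasDerivWithinAt_eq_of_ge_of_le ht₁
    (fun s _ => (differentiable_cgf hint s).hasDerivAt.hasDerivWithinAt)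
    (m := η) (by simpa [deriv_cgf_zero, interior_integrableExpSet_eq_univ hint] using
      (hmean.trans hγη).le) (hη.le.trans (min_le_right _ _))
  refine le_trans (EReal.coe_le_coe_iff.2 ?_) (cgf_sub_mul_le_liminf_inv_mul_log_measure_gt
    hindep hident hint ht (hderiv ▸ hγη) (hderiv ▸ hη.trans_le (min_le_left _ _)))
  have hrate : z' < cgf Z ν t - t * γ :=
    EReal.coe_lt_coe_iff.1 (hz'.trans_le (neg_rateFunction_le Z ν γ t))
  have hslack : t * ε ≤ z' - z := by
    calc t * ε ≤ (t₁ + 1) * ε := by gcongr; linarith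
      _ = z' - z := mul_div_cancel₀ _ (by linarith)
  linarith

theorem tendsto_inv_mul_log_measure_sum_range [IsProbabilityMeasure P] [IsProbabilityMeasure ν]
    (hindep : iIndepFun Y P) (hident : ∀ i, IdentDistrib (Y i) Z P ν)
    (hint : ∀ t, Integrable (fun ω => exp (t * Z ω)) ν) (hmean : ν[Z] < γ) {t₁ : ℝ}
    (ht₁ : 0 ≤ t₁) (hγt₁ : γ < deriv (cgf Z ν) t₁) {E : ℕ → Set Ω}
    (hE_gt : ∀ n : ℕ, {ω | γ < (n : ℝ)⁻¹ * ∑ i ∈ Finset.range n, Y i ω} ⊆ E n)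
    (hE_ge : ∀ n : ℕ, E n ⊆ {ω | γ ≤ (n : ℝ)⁻¹ * ∑ i ∈ Finset.range n, Y i ω}) :
    Tendsto (fun n : ℕ => (((n : ℝ)⁻¹ : ℝ) : EReal) * ENNReal.log (P (E n))) atTop
      (𝓝 (-rateFunction Z ν γ)) := by
  have hmono : ∀ {A B : ℕ → Set Ω}, (∀ n, A n ⊆ B n) → ∀ n : ℕ,
      (((n : ℝ)⁻¹ : ℝ) : EReal) * ENNReal.log (P (A n))
        ≤ (((n : ℝ)⁻¹ : ℝ) : EReal) * ENNReal.log (P (B n)) := fun hAB n =>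
    mul_le_mul_of_nonneg_left (ENNReal.log_monotone (measure_mono (hAB n)))
      (EReal.coe_nonneg.2 (by positivity))
  exact tendsto_of_le_liminf_of_limsup_le
    ((neg_rateFunction_le_liminf_inv_mul_log_measure_gt hindep hident hint hmean ht₁ hγt₁).trans
      (liminf_le_liminf (Eventually.of_forall (hmono hE_gt))))
    ((limsup_le_limsup (Eventually.of_forall (hmono hE_ge))).trans
      (limsup_inv_mul_log_measure_ge_le hindep hident hint hmean))

end Cramer

lemma identDistrib_comp_of_map_eq {Ω X β : Type*} [MeasurableSpace Ω] [MeasurableSpace X]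
    [MeasurableSpace β] {P : Measure Ω} {μ : Measure X} {x : Ω → X} {f : X → β}
    (hx : Measurable x) (hf : Measurable f) (hlaw : P.map x = μ) :
    IdentDistrib (fun ω => f (x ω)) f P μ :=
  ⟨(hf.comp hx).aemeasurable, hf.aemeasurable, by rw [← hlaw, Measure.map_map hf hx]; rfl⟩

lemma tilted_llr {X : Type*} [MeasurableSpace X] {μ ν : Measure X} [IsProbabilityMeasure μ]
    [IsProbabilityMeasure ν] (hμν : μ ≪ ν) (hνμ : ν ≪ μ) : ν.tilted (llr μ ν) = μ := by
  have hexp := exp_llr_of_ac' μ ν hνμ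
  have hint : ∫ a, exp (llr μ ν a) ∂ν = 1 := by
    rw [integral_congr_ae hexp, Measure.integral_toReal_rnDeriv hμν]
    simp
  conv_rhs => rw [← Measure.withDensity_rnDeriv_eq μ ν hμν]
  refine withDensity_congr_ae ?_
  filter_upwards [hexp, Measure.rnDeriv_lt_top μ ν] with a ha hlt
  rw [hint, div_one, ha, ENNReal.ofReal_toReal hlt.ne]

theorem llr_test_error_rates_general
    {X : Type*} [MeasurableSpace X]
    (μ0 μ1 : Measure X) [IsProbabilityMeasure μ0] [IsProbabilityMeasure μ1]
    (hac01 : μ0 ≪ μ1) (hac10 : μ1 ≪ μ0)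
    (l : X → ℝ) (hl : l = fun a => Real.log (μ1.rnDeriv μ0 a).toReal)
    (hmgf0 : ∀ t : ℝ, Integrable (fun a => Real.exp (t * l a)) μ0)
    (hmgf1 : ∀ t : ℝ, Integrable (fun a => Real.exp (t * l a)) μ1)
    {Ω : Type*} [MeasurableSpace Ω]
    (P0 P1 : Measure Ω) [IsProbabilityMeasure P0] [IsProbabilityMeasure P1]
    (x : ℕ → Ω → X)
    (hmeas0 : ∀ i, Measurable (x i))
    (hindep0 : iIndepFun x P0)
    (hindep1 : iIndepFun x P1)
    (hlaw0 : ∀ i, Measure.map (x i) P0 = μ0)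
    (hlaw1 : ∀ i, Measure.map (x i) P1 = μ1)
    (γ : ℝ) (hγ0 : ∫ a, l a ∂μ0 < γ) (hγ1 : γ < ∫ a, l a ∂μ1) :
    Tendsto
      (fun n : ℕ => (((n : ℝ)⁻¹ : ℝ) : EReal) *
        ENNReal.log (P0 {ω | γ ≤ (n : ℝ)⁻¹ * ∑ i ∈ Finset.range n, l (x i ω)}))
      atTop (nhds (- ⨆ t : ℝ, ((γ * t - cgf l μ0 t : ℝ) : EReal))) ∧
    Tendsto
      (fun n : ℕ => (((n : ℝ)⁻¹ : ℝ) : EReal) *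
        ENNReal.log (P1 {ω | (n : ℝ)⁻¹ * ∑ i ∈ Finset.range n, l (x i ω) < γ}))
      atTop (nhds (- ⨆ t : ℝ, ((γ * t - cgf l μ1 t : ℝ) : EReal))) := by
  have hlm : Measurable l := hl ▸ measurable_llr μ1 μ0
  have htilt : μ0.tilted l = μ1 := hl ▸ tilted_llr hac10 hac01
  have htilt' : μ1.tilted (-l) = μ0 := by
    rw [← htilt]
    exact tilted_neg_same (by simpa using hmgf0 1)
  have hmgf1' : ∀ t : ℝ, Integrable (fun a => exp (t * (-l) a)) μ1 := fun t => by
    simpa using hmgf1 (-t)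
  have hderiv0 : deriv (cgf l μ0) 1 = ∫ a, l a ∂μ1 := htilt ▸ deriv_cgf_one hmgf0
  have hderiv1 : deriv (cgf (-l) μ1) 1 = ∫ a, (-l) a ∂μ0 := htilt' ▸ deriv_cgf_one hmgf1'
  constructor
  · exact tendsto_inv_mul_log_measure_sum_range (Y := fun i ω => l (x i ω))
      (hindep0.comp (fun _ => l) fun _ => hlm)
      (fun i => identDistrib_comp_of_map_eq (hmeas0 i) hlm (hlaw0 i)) hmgf0 hγ0 zero_le_one
      (hderiv0 ▸ hγ1) (fun _ _ h => Set.mem_ofPred.2 h.le) fun _ => subset_rfl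
  · show Tendsto _ atTop (𝓝 (-rateFunction l μ1 γ))
    rw [← rateFunction_neg l μ1 γ]
    refine tendsto_inv_mul_log_measure_sum_range (Y := fun i ω => (-l) (x i ω))
      (hindep1.comp (fun _ => -l) fun _ => hlm.neg)
      (fun i => identDistrib_comp_of_map_eq (hmeas0 i) hlm.neg (hlaw1 i)) hmgf1'
      (by simpa [integral_neg] using hγ1) zero_le_one
      (by simpa [hderiv1, integral_neg] using hγ0) (fun n ω h => ?_) fun n ω h => ?_
    · simpa [Finset.sum_neg_distrib] using h
    · simpa [Finset.sum_neg_distrib] using h.le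

/-- **Theorem 2: optimal error rate function of the log-likelihood-ratio test.**
For mutually absolutely continuous probability measures `μ0, μ1` on `X`, with
log-likelihood ratio `l x = log (dμ1/dμ0) x`, finite KL divergences and everywhere-finite
LMGFs `φ_k = cgf l μ_k`, if under hypothesis `H_k` the data `x i` are i.i.d. with law
`μ k` and `L⁽ⁿ⁾ = (1/n) ∑ l (x i)`, then for every threshold
`γ ∈ (-D(μ0‖μ1), D(μ1‖μ0))`, the error probabilities
`α_n = P₀[L⁽ⁿ⁾ ≥ γ]` and `β_n = P₁[L⁽ⁿ⁾ < γ]` satisfy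
`(1/n) log α_n → -I₀ γ` and `(1/n) log β_n → -I₁ γ`, where `I_k` is the Fenchel–Legendre
transform of `φ_k` (limits in the extended reals, with `log 0 = ⊥`). -/
theorem llr_test_error_rates
    {X : Type*} [MeasurableSpace X]
    (μ0 μ1 : Measure X) [IsProbabilityMeasure μ0] [IsProbabilityMeasure μ1]
    (hac01 : μ0 ≪ μ1) (hac10 : μ1 ≪ μ0)
    (l : X → ℝ) (hl : l = fun a => Real.log (μ1.rnDeriv μ0 a).toReal)
    (hint0 : Integrable l μ0) (hint1 : Integrable l μ1)
    (hmgf0 : ∀ t : ℝ, Integrable (fun a => Real.exp (t * l a)) μ0)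
    (hmgf1 : ∀ t : ℝ, Integrable (fun a => Real.exp (t * l a)) μ1)
    {Ω : Type*} [MeasurableSpace Ω]
    (P0 P1 : Measure Ω) [IsProbabilityMeasure P0] [IsProbabilityMeasure P1]
    (x : ℕ → Ω → X)
    (hmeas0 : ∀ i, Measurable (x i))
    (hindep0 : iIndepFun x P0)
    (hindep1 : iIndepFun x P1)
    (hlaw0 : ∀ i, Measure.map (x i) P0 = μ0)
    (hlaw1 : ∀ i, Measure.map (x i) P1 = μ1)
    (γ : ℝ) (hγ0 : ∫ a, l a ∂μ0 < γ) (hγ1 : γ < ∫ a, l a ∂μ1) :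
    Tendsto
      (fun n : ℕ => (((n : ℝ)⁻¹ : ℝ) : EReal) *
        ENNReal.log (P0 {ω | γ ≤ (n : ℝ)⁻¹ * ∑ i ∈ Finset.range n, l (x i ω)}))
      atTop (nhds (- ⨆ t : ℝ, ((γ * t - cgf l μ0 t : ℝ) : EReal))) ∧
    Tendsto
      (fun n : ℕ => (((n : ℝ)⁻¹ : ℝ) : EReal) *
        ENNReal.log (P1 {ω | (n : ℝ)⁻¹ * ∑ i ∈ Finset.range n, l (x i ω) < γ}))
      atTop (nhds (- ⨆ t : ℝ, ((γ * t - cgf l μ1 t : ℝ) : EReal))) :=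
  llr_test_error_rates_general μ0 μ1 hac01 hac10 l hl hmgf0 hmgf1 P0 P1 x hmeas0 hindep0 hindep1
    hlaw0 hlaw1 γ hγ0 hγ1
end

section
/- (Large deviations with a convergent sequence of thresholds.) Let z_1, z_2, ... be i.i.d. real-valued random variables whose LMGF φ(t) = log E[exp(t·z_1)] is finite for every t ∈ ℝ, and let S^(n) = (1/n)·Σ_{i=1}^n z_i. Let γ > E[z_1] be such that there exists t_γ > 0 with φ'(t_γ) = γ, and let (γ_n) be any real sequence with γ_n → γ. Then lim_{n→∞} (1/n)·log P[S^(n) ≥ γ_n] = −I(γ), where I(γ) = sup_{t∈ℝ} (γ·t − φ(t)). -/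
/-!
The upper bound is Chernoff's inequality at `tγ`. For the lower bound, tilt `P` by
`exp (t * S⁽ⁿ⁾)` for some `t > tγ`: under the tilted measure `S⁽ⁿ⁾` has mean `n φ'(t)` and
variance `n φ''(t)`, so by Chebyshev it lies in `[n γₙ, n b]` with probability close to `1` as
soon as `γ < φ'(t) < b`, and undoing the tilt costs at most `exp (-n (t b - φ t))`. Since `φ'`
is analytic, monotone and `φ'(0) = E[z 0] < γ`, it is strictly increasing at `tγ`, so such `t`
exist with `t φ'(t) - φ t` arbitrarily close to `I γ = γ tγ - φ tγ`.
-/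

open MeasureTheory ProbabilityTheory Real Filter Set Topology

namespace ProbabilityTheory

variable {Ω : Type*} [MeasurableSpace Ω] {μ : Measure Ω} {X : Ω → ℝ}

lemma mem_interior_integrableExpSet (hX : ∀ t, Integrable (fun ω ↦ exp (t * X ω)) μ) (t : ℝ) :
    t ∈ interior (integrableExpSet X μ) := by
  rw [show integrableExpSet X μ = univ from eq_univ_of_forall hX, interior_univ]
  exact mem_univ t

lemma analyticOnNhd_univ_cgf (hX : ∀ t, Integrable (fun ω ↦ exp (t * X ω)) μ) :
    AnalyticOnNhd ℝ (cgf X μ) univ :=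
  fun t _ ↦ analyticAt_cgf (mem_interior_integrableExpSet hX t)

lemma monotone_deriv_cgf (hX : ∀ t, Integrable (fun ω ↦ exp (t * X ω)) μ) :
    Monotone (deriv (cgf X μ)) := by
  refine monotone_of_deriv_nonneg
    ((analyticOnNhd_univ_cgf hX).deriv.contDiff (n := 1).differentiable one_ne_zero) fun t ↦ ?_
  rw [← iteratedDeriv_one (f := cgf X μ), ← iteratedDeriv_succ,
    ← variance_tilted_mul (mem_interior_integrableExpSet hX t)]
  exact variance_nonneg _ _

lemma convexOn_cgf (hX : ∀ t, Integrable (fun ω ↦ exp (t * X ω)) μ) :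
    ConvexOn ℝ univ (cgf X μ) :=
  (monotone_deriv_cgf hX).convexOn_univ_of_deriv
    ((analyticOnNhd_univ_cgf hX).contDiff (n := 1).differentiable one_ne_zero)

lemma mul_sub_cgf_le_of_deriv_cgf_eq (hX : ∀ t, Integrable (fun ω ↦ exp (t * X ω)) μ)
    {γ s : ℝ} (hs : deriv (cgf X μ) s = γ) (t : ℝ) :
    γ * t - cgf X μ t ≤ γ * s - cgf X μ s := by
  have hconv : ConvexOn ℝ univ (fun u ↦ cgf X μ u - γ * u) :=
    (convexOn_cgf hX).sub ((LinearMap.mul ℝ ℝ γ).concaveOn convex_univ)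
  have hcgf : HasDerivAt (cgf X μ) γ s :=
    hs ▸ ((analyticOnNhd_univ_cgf hX) s (mem_univ s)).differentiableAt.hasDerivAt
  have hderiv : HasDerivAt (fun u ↦ cgf X μ u - γ * u) (γ - γ * 1) s :=
    hcgf.sub ((hasDerivAt_id' s).const_mul γ)
  have := hconv.isMinOn_of_rightDeriv_eq_zero (by simp)
    ((hderiv.hasDerivWithinAt.derivWithin (uniqueDiffWithinAt_Ioi s)).trans (by ring))
    (mem_univ t)
  simp only [mem_ofPred_eq] at this
  linarith

lemma deriv_cgf_zero_eq_integral [IsProbabilityMeasure μ]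
    (hX : ∀ t, Integrable (fun ω ↦ exp (t * X ω)) μ) : deriv (cgf X μ) 0 = μ[X] := by
  simp [deriv_cgf_zero (mem_interior_integrableExpSet hX 0)]

/-- `deriv (cgf X μ)` is monotone and analytic, so if it is not strictly increasing it is
constant, equal to its value `μ[X]` at `0`. -/
lemma deriv_cgf_lt_deriv_cgf [IsProbabilityMeasure μ]
    (hX : ∀ t, Integrable (fun ω ↦ exp (t * X ω)) μ) {s t : ℝ}
    (hs : μ[X] < deriv (cgf X μ) s) (hst : s < t) :
    deriv (cgf X μ) s < deriv (cgf X μ) t := by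
  refine (monotone_deriv_cgf hX hst.le).lt_of_ne fun heq ↦ ?_
  have hflat : deriv (cgf X μ) =ᶠ[𝓝 ((s + t) / 2)] fun _ ↦ deriv (cgf X μ) s := by
    filter_upwards [Ioo_mem_nhds (by linarith : s < (s + t) / 2) (by linarith : (s + t) / 2 < t)]
      with u hu
    exact le_antisymm (heq ▸ monotone_deriv_cgf hX hu.2.le) (monotone_deriv_cgf hX hu.1.le)
  have hconst := (analyticOnNhd_univ_cgf hX).deriv.eqOn_of_preconnected_of_eventuallyEq
    analyticOnNhd_const isPreconnected_univ (mem_univ _) hflat (mem_univ 0)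
  rw [deriv_cgf_zero_eq_integral hX] at hconst
  exact hs.ne hconst

lemma one_sub_variance_div_sq_le_measureReal_Icc [IsProbabilityMeasure μ] (hX : MemLp X 2 μ)
    {a b c : ℝ} (hc : 0 < c) (ha : a ≤ μ[X] - c) (hb : μ[X] + c ≤ b) :
    1 - Var[X; μ] / c ^ 2 ≤ μ.real {ω | X ω ∈ Icc a b} := by
  have hout : {ω | X ω ∈ Icc a b}ᶜ ⊆ {ω | c ≤ |X ω - μ[X]|} := by
    intro ω hω
    simp only [mem_compl_iff, mem_ofPred_eq, mem_Icc, not_and_or, not_le] at hω ⊢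
    rcases hω with h | h
    · rw [abs_sub_comm]; exact (by linarith : c ≤ μ[X] - X ω).trans (le_abs_self _)
    · exact (by linarith : c ≤ X ω - μ[X]).trans (le_abs_self _)
  have hcheb : μ.real {ω | X ω ∈ Icc a b}ᶜ ≤ Var[X; μ] / c ^ 2 :=
    ENNReal.toReal_le_of_le_ofReal (div_nonneg (variance_nonneg _ _) (sq_nonneg c))
      ((measure_mono hout).trans (meas_ge_le_variance_div_sq hX hc))
  rw [measureReal_compl₀ (s := {ω | X ω ∈ Icc a b})
    (hX.aestronglyMeasurable.aemeasurable.nullMeasurable measurableSet_Icc), probReal_univ] at hcheb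
  linarith

lemma tilted_mul_le_exp_mul_measure [SFinite μ] {t b : ℝ} (ht : 0 ≤ t)
    (hX : Integrable (fun ω ↦ exp (t * X ω)) μ) {s : Set Ω} (hsb : ∀ ω ∈ s, X ω ≤ b) :
    μ.tilted (t * X ·) s ≤ ENNReal.ofReal (exp (t * b - cgf X μ t)) * μ s := by
  rw [tilted_mul_apply_cgf s hX, ← setLIntegral_const]
  refine setLIntegral_mono measurable_const fun ω hω ↦ ?_
  gcongr
  exact hsb ω hω

/-- Chebyshev's inequality for the tilted measure `μ.tilted (t * X ·)`, whose mean and variance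
are the first two derivatives of `cgf X μ` at `t`, transported back to `μ`. -/
lemma exp_mul_one_sub_le_measureReal_ge [IsProbabilityMeasure μ] {t a b c : ℝ}
    (ht : t ∈ interior (integrableExpSet X μ)) (ht0 : 0 ≤ t) (hc : 0 < c)
    (ha : a ≤ deriv (cgf X μ) t - c) (hb : deriv (cgf X μ) t + c ≤ b) :
    exp (cgf X μ t - t * b) * (1 - iteratedDeriv 2 (cgf X μ) t / c ^ 2)
      ≤ μ.real {ω | a ≤ X ω} := by
  have hint := interior_subset (s := integrableExpSet X μ) ht
  have := isProbabilityMeasure_tilted hint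
  set s := {ω | X ω ∈ Icc a b}
  have hcheb : 1 - iteratedDeriv 2 (cgf X μ) t / c ^ 2 ≤ (μ.tilted (t * X ·)).real s := by
    rw [← variance_tilted_mul ht]
    exact one_sub_variance_div_sq_le_measureReal_Icc (memLp_tilted_mul ht 2) hc
      (by rwa [integral_tilted_mul_self ht]) (by rwa [integral_tilted_mul_self ht])
  have hchange : (μ.tilted (t * X ·)).real s ≤ exp (t * b - cgf X μ t) * μ.real s := by
    rw [measureReal_def, measureReal_def, ← ENNReal.toReal_ofReal (exp_pos _).le,
      ← ENNReal.toReal_mul]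
    exact ENNReal.toReal_mono (by finiteness)
      (tilted_mul_le_exp_mul_measure ht0 hint fun ω hω ↦ hω.2)
  calc exp (cgf X μ t - t * b) * (1 - iteratedDeriv 2 (cgf X μ) t / c ^ 2)
      ≤ exp (cgf X μ t - t * b) * (exp (t * b - cgf X μ t) * μ.real s) := by
        gcongr; exact hcheb.trans hchange
    _ = μ.real s := by rw [← mul_assoc, ← exp_add]; simp
    _ ≤ μ.real {ω | a ≤ X ω} := measureReal_mono fun ω hω ↦ hω.1

section IID

variable {P : Measure Ω} {z : ℕ → Ω → ℝ}

lemma integrable_exp_mul_sum_range [IsFiniteMeasure P] (hmeas : ∀ i, Measurable (z i))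
    (hindep : iIndepFun z P) (hident : ∀ i, IdentDistrib (z i) (z 0) P P) {t : ℝ}
    (ht : Integrable (fun ω ↦ exp (t * z 0 ω)) P) (n : ℕ) :
    Integrable (fun ω ↦ exp (t * (∑ i ∈ Finset.range n, z i) ω)) P :=
  hindep.integrable_exp_mul_sum hmeas fun i _ ↦
    ((hident i).comp (measurable_const_mul t).exp).integrable_iff.2 ht

lemma cgf_sum_range_eq_mul (hmeas : ∀ i, Measurable (z i)) (hindep : iIndepFun z P)
    (hident : ∀ i, IdentDistrib (z i) (z 0) P P) {t : ℝ}
    (ht : Integrable (fun ω ↦ exp (t * z 0 ω)) P) (n : ℕ) :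
    cgf (∑ i ∈ Finset.range n, z i) P t = n * cgf (z 0) P t := by
  have hcgf (i : ℕ) : cgf (z i) P t = cgf (z 0) P t := by
    rw [cgf, cgf, mgf_congr_of_identDistrib _ _ (hident i)]
  rw [hindep.cgf_sum hmeas fun i _ ↦
    ((hident i).comp (measurable_const_mul t).exp).integrable_iff.2 ht]
  simp [hcgf]

omit [MeasurableSpace Ω] in
lemma setOf_le_inv_mul_sum_range_eq {n : ℕ} (hn : n ≠ 0) (a : ℝ) :
    {ω | a ≤ (n : ℝ)⁻¹ * ∑ i ∈ Finset.range n, z i ω}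
      = {ω | n * a ≤ (∑ i ∈ Finset.range n, z i) ω} := by
  ext ω
  simp [Finset.sum_apply, ← div_eq_inv_mul, le_div_iff₀ (by positivity : (0 : ℝ) < n), mul_comm]

noncomputable def logTailRate (P : Measure Ω) (z : ℕ → Ω → ℝ) (a : ℝ) (n : ℕ) : EReal :=
  (((n : ℝ)⁻¹ : ℝ) : EReal) * ENNReal.log (P {ω | a ≤ (n : ℝ)⁻¹ * ∑ i ∈ Finset.range n, z i ω})

lemma logTailRate_le_of_measureReal_le [IsFiniteMeasure P] {n : ℕ} (hn : n ≠ 0) {a y : ℝ}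
    (h : P.real {ω | a ≤ (n : ℝ)⁻¹ * ∑ i ∈ Finset.range n, z i ω} ≤ exp (n * y)) :
    logTailRate P z a n ≤ y := by
  have hn' : (0 : ℝ) < n := by positivity
  rw [logTailRate]
  set p := P {ω | a ≤ (n : ℝ)⁻¹ * ∑ i ∈ Finset.range n, z i ω}
  rcases eq_or_ne p 0 with hp | hp
  · simp [hp, EReal.coe_mul_bot_of_pos (inv_pos.2 hn')]
  rw [ENNReal.log_pos_real hp (measure_ne_top _ _), ← EReal.coe_mul, EReal.coe_le_coe_iff,
    inv_mul_le_iff₀ hn', ← log_exp (n * y)]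
  exact log_le_log (ENNReal.toReal_pos hp (measure_ne_top _ _)) h

lemma le_logTailRate_of_exp_le_measureReal {n : ℕ} (hn : n ≠ 0) {a y : ℝ}
    (h : exp (n * y) ≤ P.real {ω | a ≤ (n : ℝ)⁻¹ * ∑ i ∈ Finset.range n, z i ω}) :
    (y : EReal) ≤ logTailRate P z a n := by
  have hn' : (0 : ℝ) < n := by positivity
  rw [logTailRate, ENNReal.log_pos_real' ((exp_pos _).trans_le h), ← EReal.coe_mul,
    EReal.coe_le_coe_iff, le_inv_mul_iff₀ hn', ← log_exp (n * y)]
  exact log_le_log (exp_pos _) h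

variable [IsProbabilityMeasure P]

lemma measureReal_le_inv_mul_sum_range_le (hmeas : ∀ i, Measurable (z i))
    (hindep : iIndepFun z P) (hident : ∀ i, IdentDistrib (z i) (z 0) P P) {t : ℝ} (ht0 : 0 ≤ t)
    (ht : Integrable (fun ω ↦ exp (t * z 0 ω)) P) {n : ℕ} (hn : n ≠ 0) (a : ℝ) :
    P.real {ω | a ≤ (n : ℝ)⁻¹ * ∑ i ∈ Finset.range n, z i ω}
      ≤ exp (n * (cgf (z 0) P t - t * a)) := by
  rw [setOf_le_inv_mul_sum_range_eq hn]
  refine (measure_ge_le_exp_cgf _ ht0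
    (integrable_exp_mul_sum_range hmeas hindep hident ht n)).trans_eq ?_
  rw [cgf_sum_range_eq_mul hmeas hindep hident ht]
  ring_nf

lemma exp_mul_one_sub_le_measureReal_le_inv_mul_sum_range (hmeas : ∀ i, Measurable (z i))
    (hindep : iIndepFun z P) (hident : ∀ i, IdentDistrib (z i) (z 0) P P)
    (hmgf : ∀ t, Integrable (fun ω ↦ exp (t * z 0 ω)) P) {t a b c : ℝ} (ht0 : 0 ≤ t)
    (hc : 0 < c) (ha : a ≤ deriv (cgf (z 0) P) t - c) (hb : deriv (cgf (z 0) P) t + c ≤ b)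
    {n : ℕ} (hn : n ≠ 0) :
    exp (n * (cgf (z 0) P t - t * b)) * (1 - iteratedDeriv 2 (cgf (z 0) P) t / (n * c ^ 2))
      ≤ P.real {ω | a ≤ (n : ℝ)⁻¹ * ∑ i ∈ Finset.range n, z i ω} := by
  have hn' : (0 : ℝ) < n := by positivity
  have hcgf : cgf (∑ i ∈ Finset.range n, z i) P = fun s ↦ n * cgf (z 0) P s :=
    funext fun s ↦ cgf_sum_range_eq_mul hmeas hindep hident (hmgf s) n
  have hderiv : deriv (cgf (∑ i ∈ Finset.range n, z i) P) t = n * deriv (cgf (z 0) P) t := by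
    rw [hcgf, deriv_const_mul_field]
  have hderiv2 : iteratedDeriv 2 (cgf (∑ i ∈ Finset.range n, z i) P) t
      = n * iteratedDeriv 2 (cgf (z 0) P) t := by
    rw [hcgf, iteratedDeriv_const_mul_field]
  have key := exp_mul_one_sub_le_measureReal_ge (a := n * a) (b := n * b)
    (mem_interior_integrableExpSet (fun s ↦ integrable_exp_mul_sum_range hmeas hindep hident
      (hmgf s) n) t) ht0 (mul_pos hn' hc) (by rw [hderiv]; nlinarith) (by rw [hderiv]; nlinarith)
  rw [hderiv2, hcgf, ← setOf_le_inv_mul_sum_range_eq hn] at key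
  convert key using 3
  · ring
  · field_simp

lemma eventually_logTailRate_lt (hmeas : ∀ i, Measurable (z i)) (hindep : iIndepFun z P)
    (hident : ∀ i, IdentDistrib (z i) (z 0) P P) {t : ℝ} (ht0 : 0 ≤ t)
    (ht : Integrable (fun ω ↦ exp (t * z 0 ω)) P) {a : ℕ → ℝ} {γ : ℝ}
    (ha : Tendsto a atTop (𝓝 γ)) {r : EReal} (hr : ((cgf (z 0) P t - t * γ : ℝ) : EReal) < r) :
    ∀ᶠ n in atTop, logTailRate P z (a n) n < r := by
  have hbound : Tendsto (fun n ↦ ((cgf (z 0) P t - t * a n : ℝ) : EReal)) atTop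
      (𝓝 ((cgf (z 0) P t - t * γ : ℝ) : EReal)) :=
    (continuous_coe_real_ereal.tendsto _).comp ((ha.const_mul t).const_sub _)
  filter_upwards [eventually_ne_atTop 0, (tendsto_order.1 hbound).2 r hr] with n hn hlt
  exact (logTailRate_le_of_measureReal_le hn
    (measureReal_le_inv_mul_sum_range_le hmeas hindep hident ht0 ht hn (a n))).trans_lt hlt

lemma eventually_lt_logTailRate (hmeas : ∀ i, Measurable (z i)) (hindep : iIndepFun z P)
    (hident : ∀ i, IdentDistrib (z i) (z 0) P P)
    (hmgf : ∀ t, Integrable (fun ω ↦ exp (t * z 0 ω)) P) {t : ℝ} (ht0 : 0 ≤ t)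
    {a : ℕ → ℝ} {γ : ℝ} (ha : Tendsto a atTop (𝓝 γ)) (hγ : γ < deriv (cgf (z 0) P) t)
    {r : EReal} (hr : r < ((cgf (z 0) P t - t * deriv (cgf (z 0) P) t : ℝ) : EReal)) :
    ∀ᶠ n in atTop, r < logTailRate P z (a n) n := by
  set φ := cgf (z 0) P
  obtain ⟨b, hrb, hb⟩ : ∃ b, r < ((φ t - t * b : ℝ) : EReal) ∧ deriv φ t < b := by
    have hcont : Continuous fun b ↦ ((φ t - t * b : ℝ) : EReal) :=
      continuous_coe_real_ereal.comp (continuous_const.sub (continuous_const.mul continuous_id))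
    exact (((hcont.tendsto _).eventually (lt_mem_nhds hr)).filter_mono nhdsWithin_le_nhds
      |>.and (self_mem_nhdsWithin : Ioi (deriv φ t) ∈ 𝓝[>] deriv φ t)).exists
  set c := min ((deriv φ t - γ) / 2) (b - deriv φ t)
  have hc : 0 < c := lt_min (by linarith) (by linarith)
  set q := fun n : ℕ ↦ 1 - iteratedDeriv 2 φ t / (n * c ^ 2)
  have hq : Tendsto q atTop (𝓝 1) := by
    simpa using tendsto_const_nhds.sub ((tendsto_const_nhds (x := iteratedDeriv 2 φ t)).div_atTop
      (tendsto_natCast_atTop_atTop.atTop_mul_const (by positivity)))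
  have hbound : Tendsto (fun n : ℕ ↦ ((φ t - t * b + (n : ℝ)⁻¹ * log (q n) : ℝ) : EReal))
      atTop (𝓝 ((φ t - t * b : ℝ) : EReal)) := by
    refine (continuous_coe_real_ereal.tendsto _).comp ?_
    simpa using tendsto_const_nhds.add (tendsto_inv_atTop_nhds_zero_nat.mul
      ((continuousAt_log one_ne_zero).tendsto.comp hq))
  have hγc : γ < deriv φ t - c := by linarith [min_le_left ((deriv φ t - γ) / 2) (b - deriv φ t)]
  filter_upwards [eventually_ne_atTop 0, ha.eventually (gt_mem_nhds hγc),
    hq.eventually (lt_mem_nhds one_pos), (tendsto_order.1 hbound).1 r hrb] with n hn han hqn hlt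
  refine hlt.trans_le (le_logTailRate_of_exp_le_measureReal hn ?_)
  have hn' : (0 : ℝ) < n := by positivity
  calc exp (n * (φ t - t * b + (n : ℝ)⁻¹ * log (q n))) = exp (n * (φ t - t * b)) * q n := by
        rw [mul_add, exp_add, mul_inv_cancel_left₀ hn'.ne', exp_log hqn]
    _ ≤ _ := exp_mul_one_sub_le_measureReal_le_inv_mul_sum_range hmeas hindep hident hmgf ht0 hc
        han.le (by linarith [min_le_right ((deriv φ t - γ) / 2) (b - deriv φ t)]) hn

end IID

end ProbabilityTheory

theorem ldp_with_moving_threshold_general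
    {Ω : Type*} [MeasurableSpace Ω] (P : Measure Ω) [IsProbabilityMeasure P]
    (z : ℕ → Ω → ℝ)
    (hmeas : ∀ i, Measurable (z i))
    (hindep : iIndepFun z P)
    (hident : ∀ i, IdentDistrib (z i) (z 0) P P)
    (hmgf : ∀ t : ℝ, Integrable (fun ω => Real.exp (t * z 0 ω)) P)
    (γ : ℝ) (hγ : ∫ ω, z 0 ω ∂P < γ)
    (tγ : ℝ) (htγ : 0 < tγ) (hderiv : deriv (cgf (z 0) P) tγ = γ)
    (γseq : ℕ → ℝ) (hγseq : Tendsto γseq atTop (nhds γ)) :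
    Tendsto
      (fun n : ℕ => (((n : ℝ)⁻¹ : ℝ) : EReal) *
        ENNReal.log (P {ω | γseq n ≤ (n : ℝ)⁻¹ * ∑ i ∈ Finset.range n, z i ω}))
      atTop (nhds (- ⨆ t : ℝ, ((γ * t - cgf (z 0) P t : ℝ) : EReal))) := by
  set φ := cgf (z 0) P
  have hI : -⨆ t : ℝ, ((γ * t - φ t : ℝ) : EReal) = ((φ tγ - tγ * γ : ℝ) : EReal) := by
    rw [le_antisymm (iSup_le fun t ↦ EReal.coe_le_coe_iff.2
      (mul_sub_cgf_le_of_deriv_cgf_eq hmgf hderiv t)) (le_iSup_of_le tγ le_rfl), ← EReal.coe_neg]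
    congr 1
    ring
  rw [hI]
  change Tendsto (fun n ↦ logTailRate P z (γseq n) n) atTop _
  refine tendsto_order.2 ⟨fun r hr ↦ ?_, fun r hr ↦
    eventually_logTailRate_lt hmeas hindep hident htγ.le (hmgf tγ) hγseq hr⟩
  have hcont : ContinuousAt (fun t ↦ ((φ t - t * deriv φ t : ℝ) : EReal)) tγ := by
    have hC : ContDiff ℝ 1 φ := (analyticOnNhd_univ_cgf hmgf).contDiff
    exact (continuous_coe_real_ereal.comp
      (hC.continuous.sub (continuous_id.mul (hC.continuous_deriv le_rfl)))).continuousAt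
  obtain ⟨t, hrt, htγt⟩ := ((hcont.eventually (lt_mem_nhds (hderiv ▸ hr))).filter_mono
    nhdsWithin_le_nhds |>.and (self_mem_nhdsWithin : Ioi tγ ∈ 𝓝[>] tγ)).exists
  exact eventually_lt_logTailRate hmeas hindep hident hmgf (htγ.trans htγt).le hγseq
    (hderiv ▸ deriv_cgf_lt_deriv_cgf hmgf (hderiv ▸ hγ) htγt) hrt

/-- **Large deviations with a convergent sequence of thresholds.** For i.i.d. real random
variables with everywhere-finite LMGF `φ = cgf (z 0) P`, a limit threshold `γ > E[z 0]`
admitting a saddlepoint `t_γ > 0` with `φ' (t_γ) = γ`, and any real sequence `γ_n → γ`,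
one has `(1/n) * log P[S⁽ⁿ⁾ ≥ γ_n] → -I γ`, where `I γ = ⨆ t, (γ * t - φ t)`
(limit taken in the extended reals, with `log 0 = ⊥`). -/
theorem ldp_with_moving_threshold
    {Ω : Type*} [MeasurableSpace Ω] (P : Measure Ω) [IsProbabilityMeasure P]
    (z : ℕ → Ω → ℝ)
    (hmeas : ∀ i, Measurable (z i))
    (hindep : iIndepFun z P)
    (hident : ∀ i, IdentDistrib (z i) (z 0) P P)
    (hint : Integrable (z 0) P)
    (hmgf : ∀ t : ℝ, Integrable (fun ω => Real.exp (t * z 0 ω)) P)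
    (γ : ℝ) (hγ : ∫ ω, z 0 ω ∂P < γ)
    (tγ : ℝ) (htγ : 0 < tγ) (hderiv : deriv (cgf (z 0) P) tγ = γ)
    (γseq : ℕ → ℝ) (hγseq : Tendsto γseq atTop (nhds γ)) :
    Tendsto
      (fun n : ℕ => (((n : ℝ)⁻¹ : ℝ) : EReal) *
        ENNReal.log (P {ω | γseq n ≤ (n : ℝ)⁻¹ * ∑ i ∈ Finset.range n, z i ω}))
      atTop (nhds (- ⨆ t : ℝ, ((γ * t - cgf (z 0) P t : ℝ) : EReal))) :=
  ldp_with_moving_threshold_general P z hmeas hindep hident hmgf γ hγ tγ htγ hderiv γseq hγseq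
end

section
/- (Mean under the exponentially tilted distribution.) Let z be a real-valued random variable with law μ whose LMGF φ(t) = log E[exp(t·z)] is finite for every t ∈ ℝ. For t ∈ ℝ define the tilted probability measure μ_t by dμ_t/dμ = exp(t·z)/E[exp(t·z)]. Then φ is differentiable at every t and the mean of z under μ_t equals φ'(t), i.e., ∫ z dμ_t = φ'(t). -/
open MeasureTheory ProbabilityTheory Real Filter

/-
Finiteness of the MGF everywhere puts every `t` in the interior of its domain, where the CGF is
analytic with `φ' t = E[z exp (t z)] / E[exp (t z)]`, the mean of `z` under the tilted measure.
-/

theorem tilted_mean_eq_deriv_cgf_general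
    (μ : Measure ℝ)
    (hmgf : ∀ t : ℝ, Integrable (fun x => Real.exp (t * x)) μ) :
    ∀ t : ℝ,
      DifferentiableAt ℝ (cgf id μ) t ∧
      ∫ x, x ∂(μ.tilted (fun x => t * x)) = deriv (cgf id μ) t := by
  intro t
  have hfinite : integrableExpSet id μ = Set.univ := Set.eq_univ_of_forall hmgf
  have ht : t ∈ interior (integrableExpSet id μ) := by
    simp only [hfinite, interior_univ, Set.mem_univ]
  exact ⟨(analyticAt_cgf ht).differentiableAt, integral_tilted_mul_self ht⟩

/-- **Mean under the exponentially tilted distribution.** Let `μ` be the law of a real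
random variable whose LMGF `φ t = log ∫ exp (t x) dμ` is finite for every `t` (expressed
by the integrability of `exp (t ·)` under `μ`). For each `t` let `μ_t = μ.tilted (t * ·)`
be the exponentially tilted probability measure, with density `exp (t x) / ∫ exp (t x) dμ`
with respect to `μ`. Then `φ` is differentiable at every `t` and the mean of the identity
under `μ_t` equals `φ' t`. -/
theorem tilted_mean_eq_deriv_cgf
    (μ : Measure ℝ) [IsProbabilityMeasure μ]
    (hmgf : ∀ t : ℝ, Integrable (fun x => Real.exp (t * x)) μ) :
    ∀ t : ℝ,
      DifferentiableAt ℝ (cgf id μ) t ∧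
      ∫ x, x ∂(μ.tilted (fun x => t * x)) = deriv (cgf id μ) t :=
  tilted_mean_eq_deriv_cgf_general μ hmgf
end

section
/- (Appendix A, limit of the scaled LMGF of the mixture LLR under H_1.) Let (X, ν) be a σ-finite measure space, Θ a finite nonempty set, θ_0 ∉ Θ, and for each θ ∈ Θ ∪ {θ_0} let f(·|θ) be a strictly positive probability density with respect to ν; let w : Θ → (0,1] satisfy Σ_{θ∈Θ} w_θ = 1. Fix θ_* ∈ Θ, let x_1, x_2, ... be i.i.d. with density f(·|θ_*), and define L^(n) = (1/n)·log( Σ_{θ∈Θ} w_θ·Π_{i=1}^n f(x_i|θ) / Π_{i=1}^n f(x_i|θ_0) ) and R_n = Σ_{θ∈Θ, θ≠θ_*} (w_θ/w_{θ_*})·Π_{i=1}^n ( f(x_i|θ)/f(x_i|θ_*) ). Assume: (i) D(θ_*‖θ) > 0 for every θ ∈ Θ with θ ≠ θ_*; (ii) the LMGF φ_{θ_*}(t) = log E_{θ_*}[exp( t·log( f(x|θ_*)/f(x|θ_0) ) )] is finite for every t ∈ ℝ; and (iii) for every s ≥ 0, (1/n)·log E_{θ_*}[(1 + R_n)^s]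 → 0 as n → ∞. Then for every t ≥ 0, lim_{n→∞} (1/n)·log E_{θ_*}[exp(n·t·L^(n))] = φ_{θ_*}(t). -/
/-!
Factoring the `θ⋆` term out of the mixture gives
`exp (n t L⁽ⁿ⁾) = w θ⋆ ^ t · (1 + Rₙ) ^ t · exp (t Sₙ)`, where `Sₙ` is the sum of the i.i.d.
log-likelihood ratios `log (f θ⋆ / f₀) (xᵢ)`, so that `E exp (u Sₙ) = M(u)ⁿ` with `M` the
moment generating function of one ratio. Since `Rₙ ≥ 0`, the exponential growth rate is at least
`log M(t)`. For the upper bound, Hölder's inequality with conjugate exponents `p, q` bounds it by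
`p⁻¹ · 0 + q⁻¹ log M(t q)`, the first term because `(1 + Rₙ) ^ (t p)` grows subexponentially;
letting `q ↓ 1` and using the continuity of `M` (finite on all of `ℝ`) closes the gap.
-/

open MeasureTheory ProbabilityTheory Real Filter Topology ExpGrowth
open scoped ENNReal

lemma EReal.coe_inv_natCast_mul_eq_div (x : EReal) (n : ℕ) :
    (((n : ℝ)⁻¹ : ℝ) : EReal) * x = x / n := by
  rw [EReal.coe_inv, EReal.coe_natCast, mul_comm, div_eq_mul_inv]

namespace ExpGrowth

lemma tendsto_log_const_mul_div {u : ℕ → ℝ≥0∞} {c : ℝ≥0∞} (hc₀ : c ≠ 0) (hc : c ≠ ∞)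
    {L : EReal} (h : Tendsto (fun n ↦ ENNReal.log (u n) / n) atTop (𝓝 L)) :
    Tendsto (fun n ↦ ENNReal.log (c * u n) / n) atTop (𝓝 L) := by
  have hc_div : Tendsto (fun n : ℕ ↦ ENNReal.log c / n) atTop (𝓝 0) :=
    EReal.tendsto_const_div_atTop_nhds_zero_nat (fun h ↦ hc₀ (ENNReal.log_eq_bot_iff.1 h))
      (fun h ↦ hc (ENNReal.log_eq_top_iff.1 h))
  have := ((EReal.continuousAt_add (.inl EReal.zero_ne_top) (.inl EReal.zero_ne_bot)).tendsto.comp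
    (hc_div.prodMk_nhds h))
  simp only [zero_add] at this
  refine this.congr fun n ↦ ?_
  simp only [Function.comp_apply, ENNReal.log_mul_add,
    EReal.add_div_of_nonneg_right (Nat.cast_nonneg' n)]

lemma expGrowthSup_rpow_le {u : ℕ → ℝ≥0∞} {r a : ℝ} (hr : 0 ≤ r)
    (h : expGrowthSup u ≤ a) : expGrowthSup (fun n ↦ u n ^ r) ≤ ((r * a : ℝ) : EReal) := by
  rw [expGrowthSup, EReal.coe_mul]
  simp only [ENNReal.log_rpow, mul_div_assoc]
  rw [EReal.limsup_const_mul_of_nonneg_of_ne_top (EReal.coe_nonneg.2 hr) (EReal.coe_ne_top r)]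
  exact mul_le_mul_of_nonneg_left h (EReal.coe_nonneg.2 hr)

lemma expGrowthSup_lintegral_mul_le {Ω : Type*} [MeasurableSpace Ω] {μ : Measure Ω}
    {f g : ℕ → Ω → ℝ≥0∞} (hf : ∀ n, AEMeasurable (f n) μ) (hg : ∀ n, AEMeasurable (g n) μ)
    {p q : ℝ} (hpq : p.HolderConjugate q) {a b : ℝ}
    (ha : expGrowthSup (fun n ↦ ∫⁻ ω, f n ω ^ p ∂μ) ≤ a)
    (hb : expGrowthSup (fun n ↦ ∫⁻ ω, g n ω ^ q ∂μ) ≤ b) :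
    expGrowthSup (fun n ↦ ∫⁻ ω, f n ω * g n ω ∂μ) ≤ ((p⁻¹ * a + q⁻¹ * b : ℝ) : EReal) := by
  have hA := expGrowthSup_rpow_le (one_div_nonneg.2 hpq.nonneg) ha
  have hB := expGrowthSup_rpow_le (one_div_nonneg.2 hpq.symm.nonneg) hb
  rw [one_div] at hA hB
  calc expGrowthSup (fun n ↦ ∫⁻ ω, f n ω * g n ω ∂μ)
      ≤ expGrowthSup ((fun n ↦ (∫⁻ ω, f n ω ^ p ∂μ) ^ (1 / p)) *
          fun n ↦ (∫⁻ ω, g n ω ^ q ∂μ) ^ (1 / q)) :=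
        expGrowthSup_monotone fun n ↦ ENNReal.lintegral_mul_le_Lp_mul_Lq μ hpq (hf n) (hg n)
    _ ≤ expGrowthSup (fun n ↦ (∫⁻ ω, f n ω ^ p ∂μ) ^ p⁻¹) +
          expGrowthSup (fun n ↦ (∫⁻ ω, g n ω ^ q ∂μ) ^ q⁻¹) := by
        simp only [one_div]
        exact expGrowthSup_mul_le (.inr (hB.trans_lt (EReal.coe_lt_top _)).ne)
          (.inl (hA.trans_lt (EReal.coe_lt_top _)).ne)
    _ ≤ ((p⁻¹ * a + q⁻¹ * b : ℝ) : EReal) := by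
        rw [EReal.coe_add]
        exact add_le_add hA hB

lemma expGrowthSup_lintegral_mul_le_of_continuousWithinAt {Ω : Type*}
    [MeasurableSpace Ω] {μ : Measure Ω} {V G : ℕ → Ω → ℝ≥0∞}
    (hV : ∀ n, AEMeasurable (V n) μ) (hG : ∀ n, AEMeasurable (G n) μ)
    (hVp : ∀ p : ℝ, 1 < p → expGrowthSup (fun n ↦ ∫⁻ ω, V n ω ^ p ∂μ) ≤ 0) {Λ : ℝ → ℝ}
    (hGq : ∀ q : ℝ, 1 < q → expGrowthSup (fun n ↦ ∫⁻ ω, G n ω ^ q ∂μ) ≤ Λ q)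
    (hΛ : ContinuousWithinAt Λ (Set.Ioi 1) 1) :
    expGrowthSup (fun n ↦ ∫⁻ ω, V n ω * G n ω ∂μ) ≤ Λ 1 := by
  have hlim : Tendsto (fun q ↦ ((q⁻¹ * Λ q : ℝ) : EReal)) (𝓝[>] 1) (𝓝 (Λ 1 : EReal)) := by
    refine EReal.tendsto_coe.2 ?_
    simpa using (tendsto_inv₀ (one_ne_zero (α := ℝ))).mono_left nhdsWithin_le_nhds |>.mul
      hΛ.tendsto
  refine ge_of_tendsto hlim ?_
  filter_upwards [self_mem_nhdsWithin] with q (hq : 1 < q)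
  have hpq := (Real.HolderConjugate.conjExponent hq).symm
  have := expGrowthSup_lintegral_mul_le hV hG hpq (a := 0)
    ((hVp _ hpq.lt).trans_eq EReal.coe_zero.symm) (hGq q hq)
  rwa [mul_zero, zero_add] at this

end ExpGrowth

lemma lintegral_exp_mul_sum_range_eq_pow {Ω : Type*} [MeasurableSpace Ω] {P : Measure Ω}
    [IsProbabilityMeasure P] {Y : ℕ → Ω → ℝ} (hYmeas : ∀ i, Measurable (Y i))
    (hindep : iIndepFun Y P) (hident : ∀ i, IdentDistrib (Y i) (Y 0) P P) {u : ℝ}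
    (hint : Integrable (fun ω ↦ exp (u * Y 0 ω)) P) (n : ℕ) :
    ∫⁻ ω, ENNReal.ofReal (exp (u * ∑ i ∈ Finset.range n, Y i ω)) ∂P =
      ENNReal.ofReal (mgf (Y 0) P u) ^ n := by
  have hint_sum := hindep.integrable_exp_mul_sum hYmeas (s := Finset.range n)
    fun i _ ↦ ((hident i).comp (measurable_const_mul u).exp).integrable_iff.2 hint
  simp only [Finset.sum_apply] at hint_sum
  have hmgf : ∫ ω, exp (u * ∑ i ∈ Finset.range n, Y i ω) ∂P = mgf (Y 0) P u ^ n := calc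
    _ = mgf (∑ i ∈ Finset.range n, Y i) P u := by simp only [mgf, Finset.sum_apply]
    _ = mgf (Y 0) P u ^ n := by
      rw [hindep.mgf_sum hYmeas, Finset.prod_congr rfl fun i _ ↦
        mgf_congr_of_identDistrib _ _ (hident i) u, Finset.prod_const, Finset.card_range]
  rw [← ofReal_integral_eq_lintegral_ofReal hint_sum (ae_of_all _ fun ω ↦ (exp_pos _).le), hmgf,
    ENNReal.ofReal_pow mgf_nonneg]

theorem tendsto_log_lintegral_one_add_rpow_mul_exp_sum_div {Ω : Type*} [MeasurableSpace Ω]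
    {P : Measure Ω} [IsProbabilityMeasure P] {Y : ℕ → Ω → ℝ} (hYmeas : ∀ i, Measurable (Y i))
    (hindep : iIndepFun Y P) (hident : ∀ i, IdentDistrib (Y i) (Y 0) P P)
    (hint : ∀ u, Integrable (fun ω ↦ exp (u * Y 0 ω)) P)
    {R : ℕ → Ω → ℝ} (hRmeas : ∀ n, Measurable (R n)) (hR0 : ∀ n ω, 0 ≤ R n ω)
    (hRgrowth : ∀ s : ℝ, 0 ≤ s →
      expGrowthSup (fun n ↦ ∫⁻ ω, ENNReal.ofReal ((1 + R n ω) ^ s) ∂P) ≤ 0)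
    {t : ℝ} (ht : 0 ≤ t) :
    Tendsto (fun n : ℕ ↦ ENNReal.log (∫⁻ ω, ENNReal.ofReal
        ((1 + R n ω) ^ t * exp (t * ∑ i ∈ Finset.range n, Y i ω)) ∂P) / n)
      atTop (𝓝 (log (mgf (Y 0) P t))) := by
  have h1R : ∀ n ω, 0 ≤ 1 + R n ω := fun n ω ↦ by linarith [hR0 n ω]
  have hlog_mgf : ∀ u, ENNReal.log (ENNReal.ofReal (mgf (Y 0) P u)) = log (mgf (Y 0) P u) :=
    fun u ↦ ENNReal.log_ofReal_of_pos (mgf_pos (hint u))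
  have hpow : ∀ u, (fun n ↦ ∫⁻ ω, ENNReal.ofReal (exp (u * ∑ i ∈ Finset.range n, Y i ω)) ∂P) =
      fun n ↦ ENNReal.ofReal (mgf (Y 0) P u) ^ n :=
    fun u ↦ funext (lintegral_exp_mul_sum_range_eq_pow hYmeas hindep hident (hint u))
  refine tendsto_of_le_liminf_of_limsup_le ?_ ?_
  · calc (log (mgf (Y 0) P t) : EReal)
        = expGrowthInf fun n ↦
            ∫⁻ ω, ENNReal.ofReal (exp (t * ∑ i ∈ Finset.range n, Y i ω)) ∂P := by
          rw [hpow, expGrowthInf_pow, hlog_mgf]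
      _ ≤ _ := expGrowthInf_monotone fun n ↦ lintegral_mono fun ω ↦ ENNReal.ofReal_le_ofReal <|
          le_mul_of_one_le_left (exp_pos _).le (one_le_rpow (le_add_of_nonneg_right (hR0 n ω)) ht)
  · have hsplit : ∀ n ω, ENNReal.ofReal ((1 + R n ω) ^ t * exp (t * ∑ i ∈ Finset.range n, Y i ω)) =
        ENNReal.ofReal ((1 + R n ω) ^ t) * ENNReal.ofReal (exp (t * ∑ i ∈ Finset.range n, Y i ω)) :=
      fun n ω ↦ ENNReal.ofReal_mul (rpow_nonneg (h1R n ω) t)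
    simp only [hsplit]
    have := expGrowthSup_lintegral_mul_le_of_continuousWithinAt (μ := P)
      (V := fun n ω ↦ ENNReal.ofReal ((1 + R n ω) ^ t))
      (G := fun n ω ↦ ENNReal.ofReal (exp (t * ∑ i ∈ Finset.range n, Y i ω)))
      (fun n ↦ ((measurable_const.add (hRmeas n)).pow_const t).ennreal_ofReal.aemeasurable)
      (fun n ↦ ((Finset.measurable_sum _ fun i _ ↦ hYmeas i).const_mul t).exp.ennreal_ofReal
        |>.aemeasurable)
      (Λ := fun q ↦ log (mgf (Y 0) P (t * q))) ?_ ?_ ?_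
    · rwa [mul_one] at this
    · intro p hp
      simp_rw [ENNReal.ofReal_rpow_of_nonneg (rpow_nonneg (h1R _ _) t) (by linarith : (0 : ℝ) ≤ p),
        ← rpow_mul (h1R _ _)]
      exact hRgrowth _ (mul_nonneg ht (by linarith))
    · intro q hq
      simp_rw [ENNReal.ofReal_rpow_of_nonneg (exp_pos _).le (by linarith), ← exp_mul,
        mul_right_comm t, hpow, expGrowthSup_pow, hlog_mgf, le_refl]
    · exact (((continuous_mgf hint).comp (continuous_const_mul t)).continuousAt.log
        (mgf_pos (hint _)).ne').continuousWithinAt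

lemma Finset.sum_eq_mul_one_add_sum_erase_div {ι K : Type*} [DecidableEq ι] [Field K]
    {s : Finset ι} {a : ι → K} {j : ι} (hj : j ∈ s) (ha : a j ≠ 0) :
    ∑ i ∈ s, a i = a j * (1 + ∑ i ∈ s.erase j, a i / a j) := by
  rw [← Finset.add_sum_erase s a hj, mul_add, mul_one, Finset.mul_sum]
  congr 1
  exact Finset.sum_congr rfl fun i _ ↦ (mul_div_cancel₀ _ ha).symm

lemma exp_mul_log_sum_mul_prod_div_prod {Θ ι : Type*} [Fintype Θ] [DecidableEq Θ]
    (s : Finset ι) {w : Θ → ℝ} (hw : ∀ θ, 0 < w θ) {F : Θ → ι → ℝ} (hF : ∀ θ i, 0 < F θ i)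
    {G : ι → ℝ} (hG : ∀ i, 0 < G i) (θs : Θ) (t : ℝ) :
    exp (t * log ((∑ θ, w θ * ∏ i ∈ s, F θ i) / ∏ i ∈ s, G i)) =
      w θs ^ t * ((1 + ∑ θ ∈ Finset.univ.erase θs, w θ / w θs * ∏ i ∈ s, F θ i / F θs i) ^ t *
        exp (t * ∑ i ∈ s, log (F θs i / G i))) := by
  set R := ∑ θ ∈ Finset.univ.erase θs, w θ / w θs * ∏ i ∈ s, F θ i / F θs i
  have hFs : 0 < ∏ i ∈ s, F θs i := Finset.prod_pos fun i _ ↦ hF θs i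
  have hGs : 0 < ∏ i ∈ s, G i := Finset.prod_pos fun i _ ↦ hG i
  have hR : 0 < 1 + R := add_pos_of_pos_of_nonneg one_pos <| Finset.sum_nonneg fun θ _ ↦
    mul_nonneg (div_pos (hw θ) (hw θs)).le
      (Finset.prod_nonneg fun i _ ↦ (div_pos (hF θ i) (hF θs i)).le)
  have hsum : ∑ θ, w θ * ∏ i ∈ s, F θ i = w θs * (1 + R) * ∏ i ∈ s, F θs i := by
    rw [Finset.sum_eq_mul_one_add_sum_erase_div (Finset.mem_univ θs) (mul_pos (hw θs) hFs).ne',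
      mul_right_comm]
    simp_rw [R, Finset.prod_div_distrib, mul_div_mul_comm]
  rw [hsum, mul_div_assoc, log_mul (mul_pos (hw θs) hR).ne' (div_pos hFs hGs).ne',
    log_mul (hw θs).ne' hR.ne', ← Finset.prod_div_distrib,
    log_prod fun i _ ↦ (div_pos (hF θs i) (hG i)).ne', rpow_def_of_pos (hw θs),
    rpow_def_of_pos hR, ← exp_add, ← exp_add]
  ring_nf

theorem mixture_llr_scaled_lmgf_H1_general
    {X : Type*} [MeasurableSpace X] (ν : Measure X)
    {Θ : Type*} [Fintype Θ] [DecidableEq Θ]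
    (f : Θ → X → ℝ) (f0 : X → ℝ)
    (hfmeas : ∀ θ, Measurable (f θ)) (hf0meas : Measurable f0)
    (hfpos : ∀ θ a, 0 < f θ a) (hf0pos : ∀ a, 0 < f0 a)
    (w : Θ → ℝ) (hwpos : ∀ θ, 0 < w θ)
    (θs : Θ)
    {Ω : Type*} [MeasurableSpace Ω] (P : Measure Ω) [IsProbabilityMeasure P]
    (x : ℕ → Ω → X) (hxmeas : ∀ i, Measurable (x i))
    (hindep : iIndepFun x P)
    (hlaw : ∀ i, Measure.map (x i) P = ν.withDensity (fun a => ENNReal.ofReal (f θs a)))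
    (L : ℕ → Ω → ℝ)
    (hL : L = fun (n : ℕ) (ω : Ω) => (n : ℝ)⁻¹ * Real.log
      ((∑ θ, w θ * ∏ i ∈ Finset.range n, f θ (x i ω)) /
        ∏ i ∈ Finset.range n, f0 (x i ω)))
    (R : ℕ → Ω → ℝ)
    (hR : R = fun (n : ℕ) (ω : Ω) => ∑ θ ∈ Finset.univ.erase θs,
      (w θ / w θs) * ∏ i ∈ Finset.range n, (f θ (x i ω) / f θs (x i ω)))
    (φ : ℝ → ℝ)
    (hφ : φ = fun t => Real.log
      (∫ ω, Real.exp (t * Real.log (f θs (x 0 ω) / f0 (x 0 ω))) ∂P))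
    (hφfin : ∀ t : ℝ,
      Integrable (fun ω => Real.exp (t * Real.log (f θs (x 0 ω) / f0 (x 0 ω)))) P)
    (hRlim : ∀ s : ℝ, 0 ≤ s →
      Tendsto (fun n : ℕ => (((n : ℝ)⁻¹ : ℝ) : EReal) *
          ENNReal.log (∫⁻ ω, ENNReal.ofReal ((1 + R n ω) ^ s) ∂P))
        atTop (nhds (0 : EReal))) :
    ∀ t : ℝ, 0 ≤ t →
      Tendsto (fun n : ℕ => (((n : ℝ)⁻¹ : ℝ) : EReal) *
          ENNReal.log (∫⁻ ω, ENNReal.ofReal (Real.exp ((n : ℝ) * t * L n ω)) ∂P))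
        atTop (nhds ((φ t : ℝ) : EReal)) := by
  intro t ht
  set Y : ℕ → Ω → ℝ := fun i ω ↦ log (f θs (x i ω) / f0 (x i ω))
  have hllr : Measurable fun a ↦ log (f θs a / f0 a) := ((hfmeas θs).div hf0meas).log
  have hident : ∀ i, IdentDistrib (Y i) (Y 0) P P := fun i ↦
    IdentDistrib.comp ⟨(hxmeas i).aemeasurable, (hxmeas 0).aemeasurable,
      (hlaw i).trans (hlaw 0).symm⟩ hllr
  have hRmeas : ∀ n, Measurable (R n) := fun n ↦ by rw [hR]; fun_prop
  have hR0 : ∀ n ω, 0 ≤ R n ω := fun n ω ↦ hR ▸ Finset.sum_nonneg fun θ _ ↦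
    mul_nonneg (div_pos (hwpos θ) (hwpos θs)).le
      (Finset.prod_nonneg fun i _ ↦ (div_pos (hfpos θ _) (hfpos θs _)).le)
  have hwt : 0 < w θs ^ t := rpow_pos_of_pos (hwpos θs) t
  have hfactor : ∀ n ≠ 0, ∀ ω, exp (n * t * L n ω) =
      w θs ^ t * ((1 + R n ω) ^ t * exp (t * ∑ i ∈ Finset.range n, Y i ω)) := by
    intro n hn ω
    simp only [hL, hR]
    rw [mul_comm (n : ℝ) t, mul_assoc, mul_inv_cancel_left₀ (Nat.cast_ne_zero.2 hn)]
    exact exp_mul_log_sum_mul_prod_div_prod _ hwpos (fun θ i ↦ hfpos θ (x i ω))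
      (fun i ↦ hf0pos (x i ω)) θs t
  simp only [EReal.coe_inv_natCast_mul_eq_div] at hRlim ⊢
  have key := tendsto_log_lintegral_one_add_rpow_mul_exp_sum_div (Y := Y)
    (fun i ↦ hllr.comp (hxmeas i)) (hindep.comp _ fun _ ↦ hllr) hident hφfin hRmeas hR0
    (fun s hs ↦ (hRlim s hs).limsup_eq.le) ht
  rw [hφ]
  refine (tendsto_log_const_mul_div (ENNReal.ofReal_pos.2 hwt).ne' ENNReal.ofReal_ne_top
    key).congr' ?_
  filter_upwards [eventually_ne_atTop 0] with n hn
  simp only [hfactor n hn, ENNReal.ofReal_mul hwt.le]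
  rw [lintegral_const_mul' _ _ ENNReal.ofReal_ne_top]

/-- **Appendix A: limit of the scaled LMGF of the mixture LLR under `H₁`.**
With strictly positive probability densities `f θ` (for `θ` in a finite set `Θ`) and
`f₀` (the density of `θ₀ ∉ Θ`) with respect to a σ-finite measure `ν`, a prior
`w : Θ → (0,1]` summing to `1`, data i.i.d. with density `f θ⋆`, mixture LLR `L⁽ⁿ⁾` and
remainder `R_n`, and assuming (i) `D(θ⋆‖θ) > 0` for `θ ≠ θ⋆`, (ii) the LMGF
`φ⋆ t = log E_{θ⋆}[exp (t log (f θ⋆ / f₀))]` is finite for all `t`, and (iii) for all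
`s ≥ 0` the scaled log of `E_{θ⋆}[(1+R_n)^s]` tends to `0`, one has, for every `t ≥ 0`,
`(1/n) log E_{θ⋆}[exp (n t L⁽ⁿ⁾)] → φ⋆ t` (logarithms of possibly infinite expectations
taken in the extended reals). -/
theorem mixture_llr_scaled_lmgf_H1
    {X : Type*} [MeasurableSpace X] (ν : Measure X) [SigmaFinite ν]
    {Θ : Type*} [Fintype Θ] [Nonempty Θ] [DecidableEq Θ]
    (f : Θ → X → ℝ) (f0 : X → ℝ)
    (hfmeas : ∀ θ, Measurable (f θ)) (hf0meas : Measurable f0)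
    (hfpos : ∀ θ a, 0 < f θ a) (hf0pos : ∀ a, 0 < f0 a)
    (hfint : ∀ θ, ∫⁻ a, ENNReal.ofReal (f θ a) ∂ν = 1)
    (hf0int : ∫⁻ a, ENNReal.ofReal (f0 a) ∂ν = 1)
    (w : Θ → ℝ) (hwpos : ∀ θ, 0 < w θ) (hwle : ∀ θ, w θ ≤ 1)
    (hwsum : ∑ θ, w θ = 1)
    (θs : Θ)
    {Ω : Type*} [MeasurableSpace Ω] (P : Measure Ω) [IsProbabilityMeasure P]
    (x : ℕ → Ω → X) (hxmeas : ∀ i, Measurable (x i))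
    (hindep : iIndepFun x P)
    (hlaw : ∀ i, Measure.map (x i) P = ν.withDensity (fun a => ENNReal.ofReal (f θs a)))
    (L : ℕ → Ω → ℝ)
    (hL : L = fun (n : ℕ) (ω : Ω) => (n : ℝ)⁻¹ * Real.log
      ((∑ θ, w θ * ∏ i ∈ Finset.range n, f θ (x i ω)) /
        ∏ i ∈ Finset.range n, f0 (x i ω)))
    (R : ℕ → Ω → ℝ)
    (hR : R = fun (n : ℕ) (ω : Ω) => ∑ θ ∈ Finset.univ.erase θs,
      (w θ / w θs) * ∏ i ∈ Finset.range n, (f θ (x i ω) / f θs (x i ω)))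
    (hKL : ∀ θ : Θ, θ ≠ θs → 0 < ∫ a, f θs a * Real.log (f θs a / f θ a) ∂ν)
    (φ : ℝ → ℝ)
    (hφ : φ = fun t => Real.log
      (∫ ω, Real.exp (t * Real.log (f θs (x 0 ω) / f0 (x 0 ω))) ∂P))
    (hφfin : ∀ t : ℝ,
      Integrable (fun ω => Real.exp (t * Real.log (f θs (x 0 ω) / f0 (x 0 ω)))) P)
    (hRlim : ∀ s : ℝ, 0 ≤ s →
      Tendsto (fun n : ℕ => (((n : ℝ)⁻¹ : ℝ) : EReal) *
          ENNReal.log (∫⁻ ω, ENNReal.ofReal ((1 + R n ω) ^ s) ∂P))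
        atTop (nhds (0 : EReal))) :
    ∀ t : ℝ, 0 ≤ t →
      Tendsto (fun n : ℕ => (((n : ℝ)⁻¹ : ℝ) : EReal) *
          ENNReal.log (∫⁻ ω, ENNReal.ofReal (Real.exp ((n : ℝ) * t * L n ω)) ∂P))
        atTop (nhds ((φ t : ℝ) : EReal)) :=
  mixture_llr_scaled_lmgf_H1_general ν f f0 hfmeas hf0meas hfpos hf0pos w hwpos θs P x hxmeas hindep
    hlaw L hL R hR φ hφ hφfin hRlim
end

section
/- (Appendix A, limit of the scaled LMGF of the mixture LLR under H_0.) Let (X, ν) be a σ-finite measure space, Θ a finite nonempty set, θ_0 ∉ Θ, and for each θ ∈ Θ ∪ {θ_0} let f(·|θ) be a strictly positive probability density with respect to ν; let w : Θ → (0,1] satisfy Σ_{θ∈Θ} w_θ = 1. Let x_1, x_2, ... be i.i.d. with density f(·|θ_0) and define L^(n) = (1/n)·log( Σ_{θ∈Θ} w_θ·Π_{i=1}^n f(x_i|θ) / Π_{i=1}^n f(x_i|θ_0) ). Assume there is a unique θ_m ∈ Θ minimizing θ ↦ D(θ_0‖θ) over Θ, let R_n = Σ_{θ∈Θ, θ≠θ_m}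 (w_θ/w_{θ_m})·Π_{i=1}^n ( f(x_i|θ)/f(x_i|θ_m) ), and assume: (i) D(θ_0‖θ) − D(θ_0‖θ_m) > 0 for every θ ∈ Θ with θ ≠ θ_m; (ii) the LMGF φ_{θ_0}(t) = log E_{θ_0}[exp( t·log( f(x|θ_m)/f(x|θ_0) ) )] is finite for every t ∈ ℝ; and (iii) for every s ≥ 0, (1/n)·log E_{θ_0}[(1 + R_n)^s] → 0 as n → ∞. Then for every t ≥ 0, lim_{n→∞} (1/n)·log E_{θ_0}[exp(n·t·L^(n))] = φ_{θ_0}(t). -/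
/-!
Factor the mixture likelihood through its dominant component:
`exp (n t L⁽ⁿ⁾) = w_{θₘ}^t · exp (t Sₙ) · (1 + Rₙ)^t`, where `Sₙ` is the i.i.d. sum of the
log-likelihood ratios `log (f θₘ / f₀)`, so that `E[exp (t Sₙ)] = exp (n φ(t))`. Since
`1 + Rₙ ≥ 1` this gives the lower bound. For the upper bound, Hölder with exponents `p, q`
bounds the expectation by `exp (n φ(tp) / p) · E[(1 + Rₙ)^{tq}]^{1/q}`, whose second factor is
subexponential by (iii); letting `p ↓ 1`, continuity of the cumulant generating function
(finite everywhere by (ii)) closes the gap.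
-/

open MeasureTheory ProbabilityTheory Real Filter Topology ExpGrowth
open scoped ENNReal

namespace ExpGrowth

variable {u : ℕ → ℝ≥0∞} {a : EReal}

lemma coe_inv_natCast_mul_log (y : ℝ≥0∞) (n : ℕ) :
    (((n : ℝ)⁻¹ : ℝ) : EReal) * ENNReal.log y = ENNReal.log y / n := by
  rw [EReal.div_eq_inv_mul]; rfl

lemma expGrowthSup_eq_of_tendsto
    (h : Tendsto (fun n : ℕ => (((n : ℝ)⁻¹ : ℝ) : EReal) * ENNReal.log (u n)) atTop (𝓝 a)) :
    expGrowthSup u = a := by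
  simp_rw [coe_inv_natCast_mul_log] at h
  exact h.limsup_eq

lemma tendsto_of_le_expGrowthInf_of_expGrowthSup_le (h₁ : a ≤ expGrowthInf u)
    (h₂ : expGrowthSup u ≤ a) :
    Tendsto (fun n : ℕ => (((n : ℝ)⁻¹ : ℝ) : EReal) * ENNReal.log (u n)) atTop (𝓝 a) := by
  simp_rw [coe_inv_natCast_mul_log]
  exact tendsto_of_le_liminf_of_limsup_le h₁ h₂

lemma tendsto_inv_mul_log_const_mul {c : ℝ≥0∞} (hc₀ : c ≠ 0) (hc : c ≠ ⊤)
    (h : Tendsto (fun n : ℕ => (((n : ℝ)⁻¹ : ℝ) : EReal) * ENNReal.log (u n)) atTop (𝓝 a)) :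
    Tendsto (fun n : ℕ => (((n : ℝ)⁻¹ : ℝ) : EReal) * ENNReal.log (c * u n)) atTop (𝓝 a) := by
  simp_rw [coe_inv_natCast_mul_log] at h
  refine tendsto_of_le_expGrowthInf_of_expGrowthSup_le ?_ ?_
  · exact h.liminf_eq.ge.trans (expGrowthInf_of_eventually_ge hc₀ (.of_forall fun _ => le_rfl))
  · exact (expGrowthSup_le_of_eventually_le hc (.of_forall fun _ => le_rfl)).trans h.limsup_eq.le

lemma expGrowthSup_rpow {r : ℝ} (hr : 0 ≤ r) :
    expGrowthSup (fun n => u n ^ r) = r * expGrowthSup u := by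
  rw [expGrowthSup, expGrowthSup, ← EReal.limsup_const_mul_of_nonneg_of_ne_top
    (EReal.coe_nonneg.2 hr) (EReal.coe_ne_top r)]
  simp_rw [ENNReal.log_rpow, EReal.mul_div]

end ExpGrowth

lemma expGrowthSup_lintegral_ofReal_rpow_rpow {Ω : Type*} [MeasurableSpace Ω] {μ : Measure Ω}
    {Z : ℕ → Ω → ℝ} (hZ : ∀ n ω, 0 ≤ Z n ω) {t s : ℝ} (hs : 0 ≤ s)
    (hlim : Tendsto (fun n : ℕ => (((n : ℝ)⁻¹ : ℝ) : EReal) *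
      ENNReal.log (∫⁻ ω, ENNReal.ofReal (Z n ω ^ (t * s)) ∂μ)) atTop (𝓝 0)) :
    expGrowthSup (fun n => ∫⁻ ω, ENNReal.ofReal (Z n ω ^ t) ^ s ∂μ) = 0 := by
  rw [← expGrowthSup_eq_of_tendsto hlim]
  congr with n
  refine lintegral_congr fun ω => ?_
  rw [ENNReal.ofReal_rpow_of_nonneg (rpow_nonneg (hZ n ω) t) hs, ← rpow_mul (hZ n ω)]

lemma expGrowthSup_lintegral_mul_le {Ω : Type*} [MeasurableSpace Ω] {μ : Measure Ω}
    {p q : ℝ} (hpq : p.HolderConjugate q) {F G : ℕ → Ω → ℝ≥0∞}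
    (hF : ∀ n, AEMeasurable (F n) μ) (hG : ∀ n, AEMeasurable (G n) μ) {a b : ℝ}
    (ha : expGrowthSup (fun n => ∫⁻ ω, F n ω ^ p ∂μ) ≤ a)
    (hb : expGrowthSup (fun n => ∫⁻ ω, G n ω ^ q ∂μ) ≤ b) :
    expGrowthSup (fun n => ∫⁻ ω, F n ω * G n ω ∂μ) ≤ (a / p + b / q : ℝ) := by
  have holder : (fun n => ∫⁻ ω, F n ω * G n ω ∂μ) ≤
      (fun n => (∫⁻ ω, F n ω ^ p ∂μ) ^ (1 / p)) * fun n => (∫⁻ ω, G n ω ^ q ∂μ) ^ (1 / q) :=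
    fun n => ENNReal.lintegral_mul_le_Lp_mul_Lq μ hpq (hF n) (hG n)
  have hFroot := (expGrowthSup_rpow (one_div_nonneg.2 hpq.nonneg)).trans_le
    (mul_le_mul_of_nonneg_left ha (EReal.coe_nonneg.2 (one_div_nonneg.2 hpq.nonneg)))
  have hGroot := (expGrowthSup_rpow (one_div_nonneg.2 hpq.symm.nonneg)).trans_le
    (mul_le_mul_of_nonneg_left hb (EReal.coe_nonneg.2 (one_div_nonneg.2 hpq.symm.nonneg)))
  refine (expGrowthSup_monotone holder).trans ((expGrowthSup_mul_le ?_ ?_).trans ?_)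
  · exact .inr (hGroot.trans_lt (EReal.coe_lt_top _)).ne
  · exact .inl (hFroot.trans_lt (EReal.coe_lt_top _)).ne
  · refine (add_le_add hFroot hGroot).trans_eq ?_
    norm_cast
    ring

lemma continuous_cgf_of_integrable {Ω : Type*} [MeasurableSpace Ω] {μ : Measure Ω}
    {X : Ω → ℝ} (h : ∀ s, Integrable (fun ω => exp (s * X ω)) μ) : Continuous (cgf X μ) := by
  have huniv : interior (integrableExpSet X μ) = Set.univ := by
    rw [show integrableExpSet X μ = Set.univ from Set.eq_univ_of_forall h, interior_univ]
  exact continuous_iff_continuousAt.2 fun s =>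
    (analyticAt_cgf (huniv ▸ Set.mem_univ s)).continuousAt

section IID

variable {Ω : Type*} [MeasurableSpace Ω] {P : Measure Ω} [IsProbabilityMeasure P]
  {Y : ℕ → Ω → ℝ}

lemma lintegral_ofReal_exp_mul_sum (hY : ∀ i, Measurable (Y i)) (hindep : iIndepFun Y P)
    (hident : ∀ i, IdentDistrib (Y i) (Y 0) P P) {s : ℝ}
    (hs : Integrable (fun ω => exp (s * Y 0 ω)) P) (n : ℕ) :
    ∫⁻ ω, ENNReal.ofReal (exp (s * ∑ i ∈ Finset.range n, Y i ω)) ∂P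
      = ENNReal.ofReal (mgf (Y 0) P s) ^ n := by
  have hexp : Measurable fun y : ℝ => exp (s * y) := by fun_prop
  have hmgf : ∀ i, mgf (Y i) P s = mgf (Y 0) P s := fun i =>
    ((hident i).comp hexp).integral_eq
  have hint : ∀ i ∈ Finset.range n, Integrable (fun ω => exp (s * Y i ω)) P := fun i _ =>
    ((hident i).comp hexp).integrable_iff.2 hs
  have hsum := hindep.integrable_exp_mul_sum hY hint
  simp only [Finset.sum_apply] at hsum
  have hprod : mgf (Y 0) P s ^ n = mgf (∑ i ∈ Finset.range n, Y i) P s := by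
    rw [hindep.mgf_sum hY, Finset.prod_congr rfl fun i _ => hmgf i, Finset.prod_const,
      Finset.card_range]
  rw [← ofReal_integral_eq_lintegral_ofReal hsum (.of_forall fun ω => (exp_pos _).le),
    ← ENNReal.ofReal_pow mgf_nonneg, hprod]
  simp only [mgf, Finset.sum_apply]

lemma expGrowth_lintegral_ofReal_exp_mul_sum (hY : ∀ i, Measurable (Y i))
    (hindep : iIndepFun Y P) (hident : ∀ i, IdentDistrib (Y i) (Y 0) P P) {s : ℝ}
    (hs : Integrable (fun ω => exp (s * Y 0 ω)) P) :
    expGrowthInf (fun n => ∫⁻ ω, ENNReal.ofReal (exp (s * ∑ i ∈ Finset.range n, Y i ω)) ∂P)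
      = cgf (Y 0) P s ∧
    expGrowthSup (fun n => ∫⁻ ω, ENNReal.ofReal (exp (s * ∑ i ∈ Finset.range n, Y i ω)) ∂P)
      = cgf (Y 0) P s := by
  simp_rw [lintegral_ofReal_exp_mul_sum hY hindep hident hs, expGrowthInf_pow, expGrowthSup_pow,
    ENNReal.log_ofReal_of_pos (mgf_pos hs), cgf, and_self]

variable {G : ℕ → Ω → ℝ≥0∞}

lemma le_expGrowthInf_lintegral_exp_mul_sum_mul (hY : ∀ i, Measurable (Y i))
    (hindep : iIndepFun Y P) (hident : ∀ i, IdentDistrib (Y i) (Y 0) P P) {t : ℝ}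
    (ht : Integrable (fun ω => exp (t * Y 0 ω)) P) (hG : ∀ n ω, 1 ≤ G n ω) :
    (cgf (Y 0) P t : EReal) ≤ expGrowthInf (fun n =>
      ∫⁻ ω, ENNReal.ofReal (exp (t * ∑ i ∈ Finset.range n, Y i ω)) * G n ω ∂P) := by
  rw [← (expGrowth_lintegral_ofReal_exp_mul_sum hY hindep hident ht).1]
  exact expGrowthInf_monotone fun n => lintegral_mono fun ω => le_mul_of_one_le_right' (hG n ω)

lemma expGrowthSup_lintegral_exp_mul_sum_mul_le (hY : ∀ i, Measurable (Y i))
    (hindep : iIndepFun Y P) (hident : ∀ i, IdentDistrib (Y i) (Y 0) P P)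
    (hint : ∀ s, Integrable (fun ω => exp (s * Y 0 ω)) P) (hGmeas : ∀ n, Measurable (G n))
    (hG : ∀ s : ℝ, 0 ≤ s → expGrowthSup (fun n => ∫⁻ ω, G n ω ^ s ∂P) ≤ 0) (t : ℝ) :
    expGrowthSup (fun n =>
      ∫⁻ ω, ENNReal.ofReal (exp (t * ∑ i ∈ Finset.range n, Y i ω)) * G n ω ∂P)
      ≤ cgf (Y 0) P t := by
  have hbound : ∀ p, 1 < p → expGrowthSup (fun n =>
      ∫⁻ ω, ENNReal.ofReal (exp (t * ∑ i ∈ Finset.range n, Y i ω)) * G n ω ∂P)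
        ≤ (cgf (Y 0) P (t * p) / p : ℝ) := by
    intro p hp
    have hpq := Real.HolderConjugate.conjExponent hp
    have hF : ∀ n ω, ENNReal.ofReal (exp (t * ∑ i ∈ Finset.range n, Y i ω)) ^ p
        = ENNReal.ofReal (exp (t * p * ∑ i ∈ Finset.range n, Y i ω)) := fun n ω => by
      rw [ENNReal.ofReal_rpow_of_nonneg (exp_pos _).le hpq.nonneg, ← exp_mul]
      ring_nf
    have hFgrowth := (expGrowth_lintegral_ofReal_exp_mul_sum hY hindep hident (hint (t * p))).2
    simp_rw [← hF] at hFgrowth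
    have hFmeas : ∀ n, AEMeasurable
        (fun ω => ENNReal.ofReal (exp (t * ∑ i ∈ Finset.range n, Y i ω))) P := by fun_prop
    have hholder := expGrowthSup_lintegral_mul_le hpq hFmeas (fun n => (hGmeas n).aemeasurable)
      hFgrowth.le ((hG _ hpq.symm.nonneg).trans_eq EReal.coe_zero.symm)
    rwa [zero_div, add_zero] at hholder
  have hcont : ContinuousAt (fun p => cgf (Y 0) P (t * p) / p) 1 :=
    ((continuous_cgf_of_integrable hint).comp (continuous_const.mul continuous_id)).continuousAt.div
      continuousAt_id one_ne_zero
  have hlim : Tendsto (fun p => ((cgf (Y 0) P (t * p) / p : ℝ) : EReal)) (𝓝[>] 1)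
      (𝓝 (cgf (Y 0) P t)) := by
    simpa [Function.comp_def] using
      (continuous_coe_real_ereal.continuousAt.comp hcont).tendsto.mono_left nhdsWithin_le_nhds
  exact ge_of_tendsto hlim (eventually_nhdsWithin_of_forall hbound)

theorem tendsto_inv_mul_log_lintegral_exp_mul_sum_mul_rpow (hY : ∀ i, Measurable (Y i))
    (hindep : iIndepFun Y P) (hident : ∀ i, IdentDistrib (Y i) (Y 0) P P)
    (hint : ∀ s, Integrable (fun ω => exp (s * Y 0 ω)) P) {Z : ℕ → Ω → ℝ}
    (hZmeas : ∀ n, Measurable (Z n)) (hZ : ∀ n ω, 1 ≤ Z n ω)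
    (hZlim : ∀ s : ℝ, 0 ≤ s → Tendsto (fun n : ℕ => (((n : ℝ)⁻¹ : ℝ) : EReal) *
      ENNReal.log (∫⁻ ω, ENNReal.ofReal (Z n ω ^ s) ∂P)) atTop (𝓝 0)) {t : ℝ} (ht : 0 ≤ t) :
    Tendsto (fun n : ℕ => (((n : ℝ)⁻¹ : ℝ) : EReal) * ENNReal.log (∫⁻ ω,
        ENNReal.ofReal (exp (t * ∑ i ∈ Finset.range n, Y i ω)) * ENNReal.ofReal (Z n ω ^ t) ∂P))
      atTop (𝓝 (cgf (Y 0) P t)) := by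
  have hG1 : ∀ n ω, 1 ≤ ENNReal.ofReal (Z n ω ^ t) := fun n ω =>
    ENNReal.one_le_ofReal.2 (one_le_rpow (hZ n ω) ht)
  have hGgrowth : ∀ s : ℝ, 0 ≤ s →
      expGrowthSup (fun n => ∫⁻ ω, ENNReal.ofReal (Z n ω ^ t) ^ s ∂P) ≤ 0 := fun s hs =>
    (expGrowthSup_lintegral_ofReal_rpow_rpow (fun n ω => zero_le_one.trans (hZ n ω)) hs
      (hZlim (t * s) (mul_nonneg ht hs))).le
  exact tendsto_of_le_expGrowthInf_of_expGrowthSup_le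
    (le_expGrowthInf_lintegral_exp_mul_sum_mul hY hindep hident (hint t) hG1)
    (expGrowthSup_lintegral_exp_mul_sum_mul_le hY hindep hident hint
      (fun n => (hZmeas n).pow_const t |>.ennreal_ofReal) hGgrowth t)

end IID

lemma Finset.sum_mul_eq_mul_one_add_sum_erase {ι : Type*} [DecidableEq ι] {s : Finset ι} {j : ι}
    (hj : j ∈ s) (w g : ι → ℝ) (hw : w j ≠ 0) (hg : g j ≠ 0) :
    ∑ i ∈ s, w i * g i = w j * g j * (1 + ∑ i ∈ s.erase j, w i / w j * (g i / g j)) := by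
  rw [← Finset.add_sum_erase s _ hj, mul_add, mul_one, Finset.mul_sum]
  congr 1
  refine Finset.sum_congr rfl fun i _ => ?_
  field_simp

lemma sum_erase_mul_prod_likelihood_ratio_nonneg {X Θ : Type*} [Fintype Θ] [DecidableEq Θ]
    {f : Θ → X → ℝ} {w : Θ → ℝ} (hfpos : ∀ θ a, 0 < f θ a) (hwpos : ∀ θ, 0 < w θ) (θm : Θ)
    (xs : ℕ → X) (n : ℕ) :
    0 ≤ ∑ θ ∈ Finset.univ.erase θm, w θ / w θm * ∏ i ∈ Finset.range n, f θ (xs i) / f θm (xs i) :=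
  Finset.sum_nonneg fun θ _ => mul_nonneg (div_pos (hwpos θ) (hwpos θm)).le
    (Finset.prod_nonneg fun _ _ => (div_pos (hfpos θ _) (hfpos θm _)).le)

lemma exp_mul_log_mixture_ratio {X Θ : Type*} [Fintype Θ] [DecidableEq Θ]
    {f : Θ → X → ℝ} {f0 : X → ℝ} {w : Θ → ℝ} (hfpos : ∀ θ a, 0 < f θ a)
    (hf0pos : ∀ a, 0 < f0 a) (hwpos : ∀ θ, 0 < w θ) (θm : Θ) (xs : ℕ → X) (n : ℕ) (t : ℝ) :
    exp (t * log ((∑ θ, w θ * ∏ i ∈ Finset.range n, f θ (xs i)) /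
        ∏ i ∈ Finset.range n, f0 (xs i)))
      = w θm ^ t * exp (t * ∑ i ∈ Finset.range n, log (f θm (xs i) / f0 (xs i))) *
        (1 + ∑ θ ∈ Finset.univ.erase θm,
          w θ / w θm * ∏ i ∈ Finset.range n, f θ (xs i) / f θm (xs i)) ^ t := by
  have hgm : 0 < ∏ i ∈ Finset.range n, f θm (xs i) := Finset.prod_pos fun _ _ => hfpos θm _
  set R := ∑ θ ∈ Finset.univ.erase θm,
    w θ / w θm * ∏ i ∈ Finset.range n, f θ (xs i) / f θm (xs i)
  have hR : 0 < 1 + R := by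
    linarith [sum_erase_mul_prod_likelihood_ratio_nonneg hfpos hwpos θm xs n]
  have hdecomp : (∑ θ, w θ * ∏ i ∈ Finset.range n, f θ (xs i)) / ∏ i ∈ Finset.range n, f0 (xs i)
      = w θm * (∏ i ∈ Finset.range n, f θm (xs i) / f0 (xs i)) * (1 + R) := by
    have hR' : R = ∑ θ ∈ Finset.univ.erase θm, w θ / w θm *
        ((∏ i ∈ Finset.range n, f θ (xs i)) / ∏ i ∈ Finset.range n, f θm (xs i)) := by
      simp only [R, Finset.prod_div_distrib]
    rw [Finset.sum_mul_eq_mul_one_add_sum_erase (Finset.mem_univ θm) w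
      (fun θ => ∏ i ∈ Finset.range n, f θ (xs i)) (hwpos θm).ne' hgm.ne', hR',
      Finset.prod_div_distrib]
    field_simp
  have hlog_prod : log (∏ i ∈ Finset.range n, (f θm (xs i) / f0 (xs i)))
      = ∑ i ∈ Finset.range n, log (f θm (xs i) / f0 (xs i)) :=
    log_prod fun i _ => (div_pos (hfpos θm _) (hf0pos _)).ne'
  have hprod : 0 < ∏ i ∈ Finset.range n, f θm (xs i) / f0 (xs i) :=
    Finset.prod_pos fun i _ => div_pos (hfpos θm _) (hf0pos _)
  rw [hdecomp, log_mul (mul_pos (hwpos θm) hprod).ne' hR.ne',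
    log_mul (hwpos θm).ne' hprod.ne', hlog_prod,
    rpow_def_of_pos (hwpos θm), rpow_def_of_pos hR, ← exp_add, ← exp_add]
  ring_nf

theorem mixture_llr_scaled_lmgf_H0_general
    {X : Type*} [MeasurableSpace X] (ν : Measure X)
    {Θ : Type*} [Fintype Θ] [DecidableEq Θ]
    (f : Θ → X → ℝ) (f0 : X → ℝ)
    (hfmeas : ∀ θ, Measurable (f θ)) (hf0meas : Measurable f0)
    (hfpos : ∀ θ a, 0 < f θ a) (hf0pos : ∀ a, 0 < f0 a)
    (w : Θ → ℝ) (hwpos : ∀ θ, 0 < w θ)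
    {Ω : Type*} [MeasurableSpace Ω] (P : Measure Ω) [IsProbabilityMeasure P]
    (x : ℕ → Ω → X) (hxmeas : ∀ i, Measurable (x i))
    (hindep : iIndepFun x P)
    (hlaw : ∀ i, Measure.map (x i) P = ν.withDensity (fun a => ENNReal.ofReal (f0 a)))
    (L : ℕ → Ω → ℝ)
    (hL : L = fun (n : ℕ) (ω : Ω) => (n : ℝ)⁻¹ * Real.log
      ((∑ θ, w θ * ∏ i ∈ Finset.range n, f θ (x i ω)) /
        ∏ i ∈ Finset.range n, f0 (x i ω)))
    (θm : Θ)
    (R : ℕ → Ω → ℝ)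
    (hR : R = fun (n : ℕ) (ω : Ω) => ∑ θ ∈ Finset.univ.erase θm,
      (w θ / w θm) * ∏ i ∈ Finset.range n, (f θ (x i ω) / f θm (x i ω)))
    (φ : ℝ → ℝ)
    (hφ : φ = fun t => Real.log
      (∫ ω, Real.exp (t * Real.log (f θm (x 0 ω) / f0 (x 0 ω))) ∂P))
    (hφfin : ∀ t : ℝ,
      Integrable (fun ω => Real.exp (t * Real.log (f θm (x 0 ω) / f0 (x 0 ω)))) P)
    (hRlim : ∀ s : ℝ, 0 ≤ s →
      Tendsto (fun n : ℕ => (((n : ℝ)⁻¹ : ℝ) : EReal) *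
          ENNReal.log (∫⁻ ω, ENNReal.ofReal ((1 + R n ω) ^ s) ∂P))
        atTop (nhds (0 : EReal))) :
    ∀ t : ℝ, 0 ≤ t →
      Tendsto (fun n : ℕ => (((n : ℝ)⁻¹ : ℝ) : EReal) *
          ENNReal.log (∫⁻ ω, ENNReal.ofReal (Real.exp ((n : ℝ) * t * L n ω)) ∂P))
        atTop (nhds ((φ t : ℝ) : EReal)) := by
  intro t ht
  set Y : ℕ → Ω → ℝ := fun i ω => Real.log (f θm (x i ω) / f0 (x i ω))
  have hllr : Measurable fun a => Real.log (f θm a / f0 a) := by fun_prop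
  have hYident : ∀ i, IdentDistrib (Y i) (Y 0) P P := fun i =>
    IdentDistrib.comp ⟨(hxmeas i).aemeasurable, (hxmeas 0).aemeasurable, by rw [hlaw, hlaw]⟩ hllr
  have hR1 : ∀ n ω, 1 ≤ 1 + R n ω := fun n ω => by
    simpa [hR] using sum_erase_mul_prod_likelihood_ratio_nonneg hfpos hwpos θm (x · ω) n
  have hlim := tendsto_inv_mul_log_lintegral_exp_mul_sum_mul_rpow (Y := Y)
    (fun i => hllr.comp (hxmeas i)) (hindep.comp _ fun _ => hllr) hYident hφfin
    (fun n => by subst hR; fun_prop) hR1 hRlim ht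
  have hA : ∀ᶠ n : ℕ in atTop,
      ∫⁻ ω, ENNReal.ofReal (Real.exp ((n : ℝ) * t * L n ω)) ∂P = ENNReal.ofReal (w θm ^ t) *
        ∫⁻ ω, ENNReal.ofReal (exp (t * ∑ i ∈ Finset.range n, Y i ω)) *
          ENNReal.ofReal ((1 + R n ω) ^ t) ∂P := by
    filter_upwards [eventually_ne_atTop 0] with n hn
    rw [← lintegral_const_mul' _ _ ENNReal.ofReal_ne_top]
    refine lintegral_congr fun ω => ?_
    have hnt : (n : ℝ) * t * L n ω = t * Real.log ((∑ θ, w θ * ∏ i ∈ Finset.range n, f θ (x i ω)) /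
        ∏ i ∈ Finset.range n, f0 (x i ω)) := by
      rw [hL]; field_simp
    have hw : 0 ≤ w θm ^ t := rpow_nonneg (hwpos θm).le t
    rw [hnt, exp_mul_log_mixture_ratio hfpos hf0pos hwpos θm (fun i => x i ω),
      ENNReal.ofReal_mul (mul_nonneg hw (exp_pos _).le), ENNReal.ofReal_mul hw, mul_assoc]
    subst hR
    rfl
  rw [hφ]
  refine (tendsto_inv_mul_log_const_mul (by simpa using rpow_pos_of_pos (hwpos θm) t)
    ENNReal.ofReal_ne_top hlim).congr' ?_
  filter_upwards [hA] with n hn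
  rw [hn]

/-- **Appendix A: limit of the scaled LMGF of the mixture LLR under `H₀`.**
With strictly positive probability densities `f θ` (`θ` in a finite set `Θ`) and `f₀`
(density of `θ₀ ∉ Θ`) with respect to a σ-finite measure `ν`, a prior `w : Θ → (0,1]`
summing to `1`, data i.i.d. with density `f₀`, mixture LLR `L⁽ⁿ⁾`, a unique minimizer
`θₘ ∈ Θ` of `θ ↦ D(θ₀‖θ)` with remainder `R_n`, and assuming
(i) `D(θ₀‖θ) - D(θ₀‖θₘ) > 0` for `θ ≠ θₘ`, (ii) the LMGF
`φ₀ t = log E_{θ₀}[exp (t log (f θₘ / f₀))]` is finite for all `t`, and (iii) for all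
`s ≥ 0` the scaled log of `E_{θ₀}[(1+R_n)^s]` tends to `0`, one has, for every `t ≥ 0`,
`(1/n) log E_{θ₀}[exp (n t L⁽ⁿ⁾)] → φ₀ t` (logarithms of possibly infinite expectations
taken in the extended reals). -/
theorem mixture_llr_scaled_lmgf_H0
    {X : Type*} [MeasurableSpace X] (ν : Measure X) [SigmaFinite ν]
    {Θ : Type*} [Fintype Θ] [Nonempty Θ] [DecidableEq Θ]
    (f : Θ → X → ℝ) (f0 : X → ℝ)
    (hfmeas : ∀ θ, Measurable (f θ)) (hf0meas : Measurable f0)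
    (hfpos : ∀ θ a, 0 < f θ a) (hf0pos : ∀ a, 0 < f0 a)
    (hfint : ∀ θ, ∫⁻ a, ENNReal.ofReal (f θ a) ∂ν = 1)
    (hf0int : ∫⁻ a, ENNReal.ofReal (f0 a) ∂ν = 1)
    (w : Θ → ℝ) (hwpos : ∀ θ, 0 < w θ) (hwle : ∀ θ, w θ ≤ 1)
    (hwsum : ∑ θ, w θ = 1)
    {Ω : Type*} [MeasurableSpace Ω] (P : Measure Ω) [IsProbabilityMeasure P]
    (x : ℕ → Ω → X) (hxmeas : ∀ i, Measurable (x i))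
    (hindep : iIndepFun x P)
    (hlaw : ∀ i, Measure.map (x i) P = ν.withDensity (fun a => ENNReal.ofReal (f0 a)))
    (L : ℕ → Ω → ℝ)
    (hL : L = fun (n : ℕ) (ω : Ω) => (n : ℝ)⁻¹ * Real.log
      ((∑ θ, w θ * ∏ i ∈ Finset.range n, f θ (x i ω)) /
        ∏ i ∈ Finset.range n, f0 (x i ω)))
    (θm : Θ)
    (hmin : ∀ θ : Θ, θ ≠ θm →
      ∫ a, f0 a * Real.log (f0 a / f θm a) ∂ν < ∫ a, f0 a * Real.log (f0 a / f θ a) ∂ν)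
    (R : ℕ → Ω → ℝ)
    (hR : R = fun (n : ℕ) (ω : Ω) => ∑ θ ∈ Finset.univ.erase θm,
      (w θ / w θm) * ∏ i ∈ Finset.range n, (f θ (x i ω) / f θm (x i ω)))
    (φ : ℝ → ℝ)
    (hφ : φ = fun t => Real.log
      (∫ ω, Real.exp (t * Real.log (f θm (x 0 ω) / f0 (x 0 ω))) ∂P))
    (hφfin : ∀ t : ℝ,
      Integrable (fun ω => Real.exp (t * Real.log (f θm (x 0 ω) / f0 (x 0 ω)))) P)
    (hRlim : ∀ s : ℝ, 0 ≤ s →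
      Tendsto (fun n : ℕ => (((n : ℝ)⁻¹ : ℝ) : EReal) *
          ENNReal.log (∫⁻ ω, ENNReal.ofReal ((1 + R n ω) ^ s) ∂P))
        atTop (nhds (0 : EReal))) :
    ∀ t : ℝ, 0 ≤ t →
      Tendsto (fun n : ℕ => (((n : ℝ)⁻¹ : ℝ) : EReal) *
          ENNReal.log (∫⁻ ω, ENNReal.ofReal (Real.exp ((n : ℝ) * t * L n ω)) ∂P))
        atTop (nhds ((φ t : ℝ) : EReal)) :=
  mixture_llr_scaled_lmgf_H0_general ν f f0 hfmeas hf0meas hfpos hf0pos w hwpos P x hxmeas hindep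
    hlaw L hL θm R hR φ hφ hφfin hRlim
end

section
/- (Exponential decay of the remainder R_n in the mixture LLR.) Let (X, ν) be a σ-finite measure space, Θ a finite nonempty set, and for each θ ∈ Θ let f(·|θ) be a strictly positive probability density with respect to ν; let w : Θ → (0,1] satisfy Σ_{θ∈Θ} w_θ = 1. Fix θ_* ∈ Θ, let x_1, x_2, ... be i.i.d. with density f(·|θ_*), assume that for every θ ∈ Θ with θ ≠ θ_* the function x ↦ log( f(x|θ_*)/f(x|θ) ) is integrable under f(·|θ_*) with D(θ_*‖θ) > 0, and define R_n = Σ_{θ∈Θ, θ≠θ_*} (w_θ/w_{θ_*})·Π_{i=1}^n ( f(x_i|θ)/f(x_i|θ_*) ). Then for every c with 0 < c < min_{θ∈Θ, θ≠θ_*} D(θ_*‖θ), one has exp(n·c)·R_n → 0 almost surely as n → ∞; in particular R_n → 0 almost surely. -/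
/-!
Writing `S_θ(n) = ∑_{i<n} log (f θ⋆ xᵢ / f θ xᵢ)`, each product in `R_n` equals `exp (-S_θ(n))`,
and the strong law of large numbers gives `S_θ(n) / n → D(θ⋆‖θ)` almost surely. Hence
`n c - S_θ(n) → -∞` whenever `c < D(θ⋆‖θ)`, and `R_n` is a finite sum of such terms.
-/

open MeasureTheory ProbabilityTheory Real Filter Finset

theorem integral_comp_eq_integral_density_mul {X Ω : Type*} [MeasurableSpace X]
    [MeasurableSpace Ω] {ν : Measure X} {P : Measure Ω} {p : X → ℝ} (hpmeas : Measurable p)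
    (hpnonneg : ∀ a, 0 ≤ p a) {Y : Ω → X} (hY : Measurable Y)
    (hlaw : P.map Y = ν.withDensity (fun a => ENNReal.ofReal (p a))) {g : X → ℝ}
    (hg : AEStronglyMeasurable g (P.map Y)) :
    ∫ ω, g (Y ω) ∂P = ∫ a, p a * g a ∂ν := by
  rw [← integral_map hY.aemeasurable hg, hlaw, integral_withDensity_eq_integral_toReal_smul
    hpmeas.ennreal_ofReal (ae_of_all _ fun _ => ENNReal.ofReal_lt_top)]
  simp only [ENNReal.toReal_ofReal (hpnonneg _), smul_eq_mul]

theorem ae_tendsto_average_comp {X Ω : Type*} [MeasurableSpace X] [MeasurableSpace Ω]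
    {P : Measure Ω} {x : ℕ → Ω → X} (hxmeas : ∀ i, Measurable (x i)) (hindep : iIndepFun x P)
    (hident : ∀ i, P.map (x i) = P.map (x 0)) {g : X → ℝ} (hg : Measurable g)
    (hint : Integrable (fun ω => g (x 0 ω)) P) :
    ∀ᵐ ω ∂P, Tendsto (fun n : ℕ => (∑ i ∈ range n, g (x i ω)) / n) atTop
      (nhds (∫ ω, g (x 0 ω) ∂P)) := by
  refine strong_law_ae_real (fun i ω => g (x i ω)) hint (fun i j hij => ?_) fun i => ?_
  · exact (hindep.indepFun hij).comp hg hg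
  · exact (IdentDistrib.mk (hxmeas i).aemeasurable (hxmeas 0).aemeasurable (hident i)).comp hg

theorem ae_tendsto_average_log_likelihood_ratio {X Ω : Type*} [MeasurableSpace X]
    [MeasurableSpace Ω] {ν : Measure X} {P : Measure Ω} {p q : X → ℝ} (hpmeas : Measurable p)
    (hqmeas : Measurable q) (hpnonneg : ∀ a, 0 ≤ p a) {x : ℕ → Ω → X}
    (hxmeas : ∀ i, Measurable (x i)) (hindep : iIndepFun x P)
    (hlaw : ∀ i, P.map (x i) = ν.withDensity (fun a => ENNReal.ofReal (p a)))
    (hint : Integrable (fun ω => log (p (x 0 ω) / q (x 0 ω))) P) :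
    ∀ᵐ ω ∂P, Tendsto (fun n : ℕ => (∑ i ∈ range n, log (p (x i ω) / q (x i ω))) / n) atTop
      (nhds (∫ a, p a * log (p a / q a) ∂ν)) := by
  have hg : Measurable fun a => log (p a / q a) := (hpmeas.div hqmeas).log
  rw [← integral_comp_eq_integral_density_mul hpmeas hpnonneg (hxmeas 0) (hlaw 0)
    hg.aestronglyMeasurable]
  exact ae_tendsto_average_comp (g := fun a => log (p a / q a)) hxmeas hindep
    (fun i => (hlaw i).trans (hlaw 0).symm) hg hint

theorem prod_div_eq_exp_neg_sum_log {ι : Type*} (s : Finset ι) {a b : ι → ℝ}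
    (ha : ∀ i, 0 < a i) (hb : ∀ i, 0 < b i) :
    ∏ i ∈ s, b i / a i = exp (-∑ i ∈ s, log (a i / b i)) := by
  rw [← sum_neg_distrib, exp_sum]
  refine prod_congr rfl fun i _ => ?_
  rw [exp_neg, exp_log (div_pos (ha i) (hb i)), inv_div]

theorem tendsto_exp_mul_exp_neg_of_tendsto_average {S : ℕ → ℝ} {c L : ℝ}
    (hS : Tendsto (fun n : ℕ => S n / n) atTop (nhds L)) (hc : c < L) :
    Tendsto (fun n : ℕ => exp (n * c) * exp (-S n)) atTop (nhds 0) := by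
  have hlin : Tendsto (fun n : ℕ => (n : ℝ) * (c - S n / n)) atTop atBot :=
    tendsto_natCast_atTop_atTop.atTop_mul_neg (sub_neg.2 hc) (tendsto_const_nhds.sub hS)
  refine (tendsto_exp_atBot.comp hlin).congr' ?_
  filter_upwards [eventually_ne_atTop 0] with n hn
  rw [Function.comp_apply, ← exp_add, mul_sub, mul_div_cancel₀ _ (Nat.cast_ne_zero.2 hn),
    sub_eq_add_neg]

theorem tendsto_exp_mul_sum_exp_neg {ι : Type*} (s : Finset ι) (a : ι → ℝ) {S : ι → ℕ → ℝ}
    {L : ι → ℝ} {c : ℝ} (hS : ∀ i ∈ s, Tendsto (fun n : ℕ => S i n / n) atTop (nhds (L i)))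
    (hc : ∀ i ∈ s, c < L i) :
    Tendsto (fun n : ℕ => exp (n * c) * ∑ i ∈ s, a i * exp (-S i n)) atTop (nhds 0) := by
  simp_rw [mul_sum, mul_left_comm (exp _)]
  simpa using tendsto_finsetSum s fun i hi =>
    (tendsto_exp_mul_exp_neg_of_tendsto_average (hS i hi) (hc i hi)).const_mul (a i)

theorem mixture_llr_remainder_decay_general
    {X : Type*} [MeasurableSpace X] (ν : Measure X)
    {Θ : Type*} [Fintype Θ] [DecidableEq Θ]
    (f : Θ → X → ℝ)
    (hfmeas : ∀ θ, Measurable (f θ))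
    (hfpos : ∀ θ a, 0 < f θ a)
    (w : Θ → ℝ)
    (θs : Θ)
    {Ω : Type*} [MeasurableSpace Ω] (P : Measure Ω)
    (x : ℕ → Ω → X) (hxmeas : ∀ i, Measurable (x i))
    (hindep : iIndepFun x P)
    (hlaw : ∀ i, Measure.map (x i) P = ν.withDensity (fun a => ENNReal.ofReal (f θs a)))
    (hKLint : ∀ θ : Θ, θ ≠ θs →
      Integrable (fun ω => Real.log (f θs (x 0 ω) / f θ (x 0 ω))) P)
    (hKLpos : ∀ θ : Θ, θ ≠ θs → 0 < ∫ a, f θs a * Real.log (f θs a / f θ a) ∂ν)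
    (R : ℕ → Ω → ℝ)
    (hR : R = fun (n : ℕ) (ω : Ω) => ∑ θ ∈ Finset.univ.erase θs,
      (w θ / w θs) * ∏ i ∈ Finset.range n, (f θ (x i ω) / f θs (x i ω))) :
    (∀ c : ℝ, 0 < c →
      (∀ θ : Θ, θ ≠ θs → c < ∫ a, f θs a * Real.log (f θs a / f θ a) ∂ν) →
      ∀ᵐ ω ∂P, Tendsto (fun n : ℕ => Real.exp ((n : ℝ) * c) * R n ω) atTop (nhds 0)) ∧
    (∀ᵐ ω ∂P, Tendsto (fun n : ℕ => R n ω) atTop (nhds 0)) := by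
  have hslln : ∀ᵐ ω ∂P, ∀ θ ∈ univ.erase θs, Tendsto
      (fun n : ℕ => (∑ i ∈ range n, log (f θs (x i ω) / f θ (x i ω))) / n) atTop
      (nhds (∫ a, f θs a * log (f θs a / f θ a) ∂ν)) :=
    (eventually_all_finset _).2 fun θ hθ =>
      ae_tendsto_average_log_likelihood_ratio (hfmeas θs) (hfmeas θ) (fun a => (hfpos θs a).le)
        hxmeas hindep hlaw (hKLint θ (ne_of_mem_erase hθ))
  have hdecay : ∀ c : ℝ, (∀ θ : Θ, θ ≠ θs → c < ∫ a, f θs a * log (f θs a / f θ a) ∂ν) →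
      ∀ᵐ ω ∂P, Tendsto (fun n : ℕ => exp (n * c) * R n ω) atTop (nhds 0) := by
    intro c hc
    filter_upwards [hslln] with ω hω
    simp only [hR, prod_div_eq_exp_neg_sum_log _ (fun i => hfpos θs (x i ω))
      (fun i => hfpos _ (x i ω))]
    exact tendsto_exp_mul_sum_exp_neg _ _ hω fun θ hθ => hc θ (ne_of_mem_erase hθ)
  -- the decay argument needs only `c < D(θ⋆‖θ)`, so `c = 0` gives the second claim
  exact ⟨fun c _ => hdecay c, by simpa using hdecay 0 hKLpos⟩

/-- **Exponential decay of the remainder `R_n` in the mixture LLR.** With strictly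
positive probability densities `f θ` (`θ` in a finite set `Θ`) with respect to a σ-finite
measure `ν`, a prior `w : Θ → (0,1]` summing to `1`, data i.i.d. with density `f θ⋆`,
`log (f θ⋆ / f θ)` integrable under `f θ⋆` with `D(θ⋆‖θ) > 0` for every `θ ≠ θ⋆`, and
`R_n = ∑_{θ ≠ θ⋆} (w θ / w θ⋆) ∏ᵢ (f θ (xᵢ) / f θ⋆ (xᵢ))`: for every `c` with
`0 < c < min_{θ ≠ θ⋆} D(θ⋆‖θ)` one has `exp (n c) * R_n → 0` almost surely; in
particular `R_n → 0` almost surely. -/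
theorem mixture_llr_remainder_decay
    {X : Type*} [MeasurableSpace X] (ν : Measure X) [SigmaFinite ν]
    {Θ : Type*} [Fintype Θ] [Nonempty Θ] [DecidableEq Θ]
    (f : Θ → X → ℝ)
    (hfmeas : ∀ θ, Measurable (f θ))
    (hfpos : ∀ θ a, 0 < f θ a)
    (hfint : ∀ θ, ∫⁻ a, ENNReal.ofReal (f θ a) ∂ν = 1)
    (w : Θ → ℝ) (hwpos : ∀ θ, 0 < w θ) (hwle : ∀ θ, w θ ≤ 1)
    (hwsum : ∑ θ, w θ = 1)
    (θs : Θ)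
    {Ω : Type*} [MeasurableSpace Ω] (P : Measure Ω) [IsProbabilityMeasure P]
    (x : ℕ → Ω → X) (hxmeas : ∀ i, Measurable (x i))
    (hindep : iIndepFun x P)
    (hlaw : ∀ i, Measure.map (x i) P = ν.withDensity (fun a => ENNReal.ofReal (f θs a)))
    (hKLint : ∀ θ : Θ, θ ≠ θs →
      Integrable (fun ω => Real.log (f θs (x 0 ω) / f θ (x 0 ω))) P)
    (hKLpos : ∀ θ : Θ, θ ≠ θs → 0 < ∫ a, f θs a * Real.log (f θs a / f θ a) ∂ν)
    (R : ℕ → Ω → ℝ)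
    (hR : R = fun (n : ℕ) (ω : Ω) => ∑ θ ∈ Finset.univ.erase θs,
      (w θ / w θs) * ∏ i ∈ Finset.range n, (f θ (x i ω) / f θs (x i ω))) :
    (∀ c : ℝ, 0 < c →
      (∀ θ : Θ, θ ≠ θs → c < ∫ a, f θs a * Real.log (f θs a / f θ a) ∂ν) →
      ∀ᵐ ω ∂P, Tendsto (fun n : ℕ => Real.exp ((n : ℝ) * c) * R n ω) atTop (nhds 0)) ∧
    (∀ᵐ ω ∂P, Tendsto (fun n : ℕ => R n ω) atTop (nhds 0)) :=
  mixture_llr_remainder_decay_general ν f hfmeas hfpos w θs P x hxmeas hindep hlaw hKLint hKLpos R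
    hR
end
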